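/- arXiv:1710.09048 — 6 statements merged into one kernel-verified Lean document; each statement's English description precedes it below -/
import Mathlib

section
/- Let G be a finite connected simple graph with at least one edge. Then there exists a rotation system σ on G and a single face of σ (an orbit of the face-tracing permutation of σ) that contains at least one dart of every edge of G. Equivalently, G has an edge-outer orientable embedding, i.e., G has a reporter strand walk. -/
/-!
Fix a dart `d₀` and grow a set `S` of vertices, keeping a rotation system whose face through
`d₀` contains a dart of every edge meeting `S`; connectivity lets `S` grow until it contains
every vertex. A vertex `v` visited by that face is added by changing the rotation at `v` only.
If `σ` is replaced by `κ * σ` with `κ` supported on the darts `D` leaving `v`, the face-tracing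
permutation `τ` becomes `κ * τ`, and the faces of `κ * τ` through `v` are read off from the
cycles of `κ * R` on `D`, where `R` is the first-return permutation of `τ` on `D`. With
`m = σ⁻¹ * R` on `D`, one needs a cyclic `σ'` on `D` with `σ' * m` a single cycle; this is
possible when `m` is even, and when `m` is odd `σ' * m` can still be made a single cycle on
`D` minus any prescribed point `x₀` moved by `m` (induction on `|D|`, peeling off
transpositions). Unless the face already contains all of `D`, such an `x₀` exists off the
face, and then the new face contains the old one and a dart of every edge at `v`.
-/

open SimpleGraph

/-- The permutation of darts reversing each dart. -/
def dartRev {V : Type*} (G : SimpleGraph V) : Equiv.Perm G.Dart where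
  toFun d := d.symm
  invFun d := d.symm
  left_inv d := d.symm_symm
  right_inv d := d.symm_symm

/-- A rotation system on `G`: a permutation `σ` of the darts of `G` such that `σ d` has the
same initial vertex as `d`, and `σ` acts as a single cycle on the darts at each vertex
(any two darts with the same initial vertex lie in a common cycle of `σ`). -/
def IsRotationSystem {V : Type*} (G : SimpleGraph V) (σ : Equiv.Perm G.Dart) : Prop :=
  (∀ d : G.Dart, (σ d).toProd.1 = d.toProd.1) ∧
    ∀ d d' : G.Dart, d.toProd.1 = d'.toProd.1 → σ.SameCycle d d'

/-- The face-tracing permutation `τ` of a rotation system `σ`: `τ d = σ (reverse of d)`. -/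
def faceTracing {V : Type*} (G : SimpleGraph V) (σ : Equiv.Perm G.Dart) : Equiv.Perm G.Dart :=
  (dartRev G).trans σ

open Equiv Finset

namespace Equiv.Perm

variable {α : Type*}

section SameCycle

variable {σ π : Perm α} {s : Set α} {x y : α}

theorem mapsTo_of_forall_notMem_apply_eq (h : ∀ x ∉ s, σ x = x) : Set.MapsTo σ s s :=
  fun x hx => by
    by_contra hσx
    rw [σ.injective (h _ hσx)] at hσx
    exact hσx hx

variable [Finite α]

theorem SameCycle.mem_of_mapsTo (h : σ.SameCycle x y) (hs : Set.MapsTo σ s s) (hx : x ∈ s) :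
    y ∈ s := by
  obtain ⟨n, -, rfl⟩ := h.exists_pow_eq'
  rw [coe_pow]
  exact hs.iterate n hx

theorem SameCycle.of_forall_sameCycle_apply (h : σ.SameCycle x y) (hs : Set.MapsTo σ s s)
    (hstep : ∀ z ∈ s, π.SameCycle z (σ z)) (hx : x ∈ s) : π.SameCycle x y :=
  (h.mem_of_mapsTo (s := {z | z ∈ s ∧ π.SameCycle x z})
    (fun _ hz => ⟨hs hz.1, hz.2.trans (hstep _ hz.1)⟩) ⟨hx, .rfl⟩).2

theorem SameCycle.of_eqOn (h : σ.SameCycle x y) (hs : Set.MapsTo σ s s) (heq : Set.EqOn π σ s)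
    (hx : x ∈ s) : π.SameCycle x y :=
  h.of_forall_sameCycle_apply hs (fun _ hz => ⟨1, by simp [heq hz]⟩) hx

end SameCycle

section IsCycleSupportedOn

variable {σ ρ m : Perm α} {s : Finset α} {x y z c : α}

def IsCycleSupportedOn (σ : Perm α) (s : Finset α) : Prop :=
  (∀ x ∉ s, σ x = x) ∧ ∀ x ∈ s, ∀ y ∈ s, σ.SameCycle x y

namespace IsCycleSupportedOn

theorem mapsTo (h : IsCycleSupportedOn σ s) : Set.MapsTo σ s s :=
  mapsTo_of_forall_notMem_apply_eq h.1

theorem apply_ne_self (h : IsCycleSupportedOn σ s) (hx : x ∈ s) (hy : y ∈ s) (hxy : x ≠ y) :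
    σ x ≠ x :=
  fun hfix => hxy ((h.2 x hx y hy).eq_of_left hfix)

theorem conj (h : IsCycleSupportedOn ρ s) {g : Perm α} {t : Finset α}
    (ht : ∀ x, x ∈ t ↔ g⁻¹ x ∈ s) : IsCycleSupportedOn (g * ρ * g⁻¹) t := by
  refine ⟨fun x hx => ?_, fun x hx y hy => ?_⟩
  · rw [mul_apply, mul_apply, h.1 _ ((ht x).not.1 hx), Perm.coe_inv, apply_symm_apply]
  · simpa using ((h.2 _ ((ht x).1 hx) _ ((ht y).1 hy)).conj (g := g))

variable [Finite α] [DecidableEq α]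

theorem swap_mul (h : IsCycleSupportedOn σ s) (hz : z ∉ s) (hc : c ∈ s) :
    IsCycleSupportedOn (swap z c * σ) (insert z s) := by
  have hzc : z ≠ c := ne_of_mem_of_not_mem hc hz |>.symm
  have hσz : σ z = z := h.1 z hz
  have hzc' : (swap z c * σ) z = c := by simp [hσz]
  have hstep : ∀ w ∈ (s : Set α), (swap z c * σ).SameCycle w (σ w) := by
    intro w hw
    by_cases hw' : σ w = c
    · exact ⟨2, by simp [pow_two, hw', hσz]⟩
    · refine ⟨1, ?_⟩
      have : σ w ≠ z := fun e => hz (e ▸ h.mapsTo hw)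
      simp [swap_apply_of_ne_of_ne this hw']
  have hc_all : ∀ x ∈ insert z s, (swap z c * σ).SameCycle c x := by
    intro x hx
    rcases mem_insert.1 hx with rfl | hx
    · exact SameCycle.symm ⟨1, by simpa using hzc'⟩
    · exact (h.2 c hc x hx).of_forall_sameCycle_apply h.mapsTo hstep hc
  refine ⟨fun x hx => ?_, fun x hx y hy => (hc_all x hx).symm.trans (hc_all y hy)⟩
  rw [mem_insert, not_or] at hx
  simp [h.1 x hx.2, swap_apply_of_ne_of_ne hx.1 (ne_of_mem_of_not_mem hc hx.2).symm]

end IsCycleSupportedOn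

variable [Fintype α] [DecidableEq α]

theorem exists_isCycleSupportedOn (s : Finset α) : ∃ σ : Perm α, IsCycleSupportedOn σ s := by
  obtain ⟨σ, hσ, hsupp⟩ := s.exists_cycleOn
  exact ⟨σ, fun x hx => notMem_support.1 fun h => hx (hsupp h), fun x hx y hy => hσ.2 hx hy⟩

variable {A : Finset α}

omit [Fintype α] in
theorem forall_notMem_erase_mul_swap_apply_eq (hm : ∀ x ∉ A, m x = x) (hy : y ∈ A) :
    ∀ x ∉ A.erase (m y), (m * swap y (m y)) x = x := by
  intro x hx
  rcases eq_or_ne x (m y) with hxz | hxz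
  · simp [hxz]
  · have hxA : x ∉ A := fun h => hx (mem_erase.2 ⟨hxz, h⟩)
    simp [swap_apply_of_ne_of_ne (ne_of_mem_of_not_mem hy hxA).symm hxz, hm x hxA]

theorem exists_apply_ne_of_sign_eq_one (hsign : sign m = 1) (hy : m y ≠ y) :
    ∃ c, m c ≠ c ∧ c ≠ y ∧ c ≠ m y := by
  by_contra! h
  have hsupp : m.support ⊆ {y, m y} := fun c hc => by
    by_cases hcy : c = y
    · simp [hcy]
    · simp [h c (mem_support.1 hc) hcy]
  have hm1 : m ≠ 1 := fun h1 => hy (by simp [h1])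
  have hcard : m.support.card = 2 :=
    le_antisymm ((card_le_card hsupp).trans card_le_two) (two_le_card_support_of_ne_one hm1)
  rw [(card_support_eq_two.1 hcard).sign_eq] at hsign
  exact absurd hsign (by decide)

theorem exists_isCycleSupportedOn_mul_erase_of_sign_eq_neg_one (hm : ∀ x ∉ A, m x = x)
    (hsign : sign m = -1) {x₀ : α} (hx₀ : m x₀ ≠ x₀)
    (ih : ∀ m' : Perm α, (∀ x ∉ A.erase (m x₀), m' x = x) → sign m' = 1 →
      ∃ σ, IsCycleSupportedOn σ (A.erase (m x₀)) ∧
        IsCycleSupportedOn (σ * m') (A.erase (m x₀))) :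
    ∃ σ, IsCycleSupportedOn σ A ∧ IsCycleSupportedOn (σ * m) (A.erase x₀) := by
  have hx₀A : x₀ ∈ A := by_contra fun h => hx₀ (hm _ h)
  have hzA : m x₀ ∈ A := mapsTo_of_forall_notMem_apply_eq hm hx₀A
  obtain ⟨σ, hσ, hσm'⟩ := ih _ (forall_notMem_erase_mul_swap_apply_eq hm hx₀A)
    (by simp [hsign, sign_swap hx₀.symm])
  set z := m x₀
  refine ⟨swap z x₀ * σ, ?_, ?_⟩
  · simpa [insert_erase hzA] using hσ.swap_mul (notMem_erase z A) (mem_erase.2 ⟨hx₀.symm, hx₀A⟩)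
  · have hconj : swap z x₀ * σ * m = swap x₀ z * (σ * (m * swap x₀ z)) * (swap x₀ z)⁻¹ := by
      simp [swap_comm z x₀, mul_assoc]
    rw [hconj]
    refine hσm'.conj fun x => ?_
    rw [swap_inv, mem_erase, mem_erase, swap_apply_def]
    split_ifs <;> grind

theorem exists_isCycleSupportedOn_mul_of_sign_eq_one (hm : ∀ x ∉ A, m x = x)
    (hsign : sign m = 1)
    (ih : ∀ z ∈ A, ∀ m' : Perm α, (∀ x ∉ A.erase z, m' x = x) → sign m' = -1 →
      ∀ x₀, m' x₀ ≠ x₀ → ∃ σ, IsCycleSupportedOn σ (A.erase z) ∧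
        IsCycleSupportedOn (σ * m') ((A.erase z).erase x₀)) :
    ∃ σ, IsCycleSupportedOn σ A ∧ IsCycleSupportedOn (σ * m) A := by
  rcases eq_or_ne m 1 with rfl | hm1
  · obtain ⟨σ, hσ⟩ := exists_isCycleSupportedOn A
    exact ⟨σ, hσ, by rwa [mul_one]⟩
  obtain ⟨y, hy⟩ : ∃ y, m y ≠ y := by
    by_contra! h
    exact hm1 (Equiv.ext h)
  obtain ⟨c, hc, hcy, hcz⟩ := exists_apply_ne_of_sign_eq_one hsign hy
  have hyA : y ∈ A := by_contra fun h => hy (hm _ h)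
  have hcA : c ∈ A := by_contra fun h => hc (hm _ h)
  have hzA : m y ∈ A := mapsTo_of_forall_notMem_apply_eq hm hyA
  obtain ⟨σ, hσ, hρ⟩ := ih _ hzA _ (forall_notMem_erase_mul_swap_apply_eq hm hyA)
    (by simp [hsign, sign_swap hy.symm]) c (by simpa [swap_apply_of_ne_of_ne hcy hcz] using hc)
  set z := m y
  set B := (A.erase z).erase c
  set ρ := σ * (m * swap y z)
  refine ⟨swap z c * σ, ?_, ?_⟩
  · simpa [insert_erase hzA] using hσ.swap_mul (notMem_erase z A) (mem_erase.2 ⟨hcz, hcA⟩)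
  · have hyB : y ∈ B := mem_erase.2 ⟨hcy.symm, mem_erase.2 ⟨hy.symm, hyA⟩⟩
    have hzB : z ∉ B := fun h => (mem_erase.1 (mem_of_mem_erase h)).1 rfl
    have hcB : c ∉ insert z B := by simp [B, hcz]
    -- `σ * m` is `ρ` with `z` inserted after `y`, and then `c` inserted before `z`.
    have hσm : swap z c * σ * m = swap c z * (swap z (ρ y) * ρ) := by
      calc swap z c * σ * m = swap z c * (ρ * swap y z) := by simp [ρ, mul_assoc]
        _ = swap c z * (swap z (ρ y) * ρ) := by
          rw [mul_swap_eq_swap_mul, hρ.1 z hzB, swap_comm z c, swap_comm (ρ y) z]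
    have hA : insert c (insert z B) = A := by
      rw [insert_comm, insert_erase (mem_erase.2 ⟨hcz, hcA⟩), insert_erase hzA]
    rw [hσm, ← hA]
    exact (hρ.swap_mul hzB (hρ.mapsTo hyB)).swap_mul hcB (mem_insert_self z B)

theorem exists_isCycleSupportedOn_mul (A : Finset α) :
    (∀ m : Perm α, (∀ x ∉ A, m x = x) → sign m = 1 →
      ∃ σ, IsCycleSupportedOn σ A ∧ IsCycleSupportedOn (σ * m) A) ∧
    (∀ m : Perm α, (∀ x ∉ A, m x = x) → sign m = -1 → ∀ x₀, m x₀ ≠ x₀ →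
      ∃ σ, IsCycleSupportedOn σ A ∧ IsCycleSupportedOn (σ * m) (A.erase x₀)) := by
  induction A using Finset.strongInduction with
  | H A ih =>
    refine ⟨fun m hm hs => exists_isCycleSupportedOn_mul_of_sign_eq_one hm hs
      fun z hz => (ih _ (erase_ssubset hz)).2, fun m hm hs x₀ hx₀ => ?_⟩
    have hx₀A : x₀ ∈ A := by_contra fun h => hx₀ (hm _ h)
    exact exists_isCycleSupportedOn_mul_erase_of_sign_eq_neg_one hm hs hx₀
      (ih _ (erase_ssubset (mapsTo_of_forall_notMem_apply_eq hm hx₀A))).1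

theorem exists_mul_isCycleSupportedOn_of_apply_ne {c R : Perm α} (hc : IsCycleSupportedOn c A)
    (hR : ∀ x ∉ A, R x = x) {x₀ : α} (hx₀ : R x₀ ≠ c x₀) :
    ∃ κ : Perm α, (∀ x ∉ A, κ x = x) ∧ IsCycleSupportedOn (κ * c) A ∧
      ∀ x ∈ A.erase x₀, ∀ y ∈ A.erase x₀, (κ * R).SameCycle x y := by
  have hm : ∀ x ∉ A, (c⁻¹ * R) x = x := fun x hx => by
    rw [mul_apply, hR x hx, inv_eq_iff_eq, hc.1 x hx]
  have hmx₀ : (c⁻¹ * R) x₀ ≠ x₀ := by rwa [mul_apply, Ne, inv_eq_iff_eq]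
  obtain ⟨σ, hσ, hσm⟩ : ∃ σ, IsCycleSupportedOn σ A ∧
      ∀ x ∈ A.erase x₀, ∀ y ∈ A.erase x₀, (σ * (c⁻¹ * R)).SameCycle x y := by
    rcases Int.units_eq_one_or (sign (c⁻¹ * R)) with hs | hs
    · obtain ⟨σ, hσ, hσm⟩ := (exists_isCycleSupportedOn_mul A).1 _ hm hs
      exact ⟨σ, hσ, fun x hx y hy => hσm.2 x (mem_of_mem_erase hx) y (mem_of_mem_erase hy)⟩
    · obtain ⟨σ, hσ, hσm⟩ := (exists_isCycleSupportedOn_mul A).2 _ hm hs x₀ hmx₀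
      exact ⟨σ, hσ, hσm.2⟩
  refine ⟨σ * c⁻¹, fun x hx => ?_, by rwa [inv_mul_cancel_right], by simpa [mul_assoc] using hσm⟩
  rw [mul_apply, inv_eq_iff_eq.2 (hc.1 x hx).symm, hσ.1 x hx]

end IsCycleSupportedOn

section ReturnPerm

variable [Finite α] (τ : Perm α) (D : Finset α) {κ : Perm α} {x y : α}

theorem exists_pos_pow_apply_mem (hx : x ∈ D) : ∃ k, 0 < k ∧ (τ ^ k) x ∈ D :=
  ⟨orderOf τ, orderOf_pos τ, by simpa [pow_orderOf_eq_one] using hx⟩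

/-- The first time the `τ`-orbit of `x ∈ D` comes back to `D`; it is `0` off `D`. -/
noncomputable def returnTime (x : α) : ℕ := by
  classical
  exact if h : x ∈ D then Nat.find (exists_pos_pow_apply_mem τ D h) else 0

theorem returnTime_spec (hx : x ∈ D) :
    0 < returnTime τ D x ∧ (τ ^ returnTime τ D x) x ∈ D ∧
      ∀ i, 0 < i → i < returnTime τ D x → (τ ^ i) x ∉ D := by
  classical
  simp only [returnTime, dif_pos hx]
  exact ⟨(Nat.find_spec (exists_pos_pow_apply_mem τ D hx)).1,
    (Nat.find_spec (exists_pos_pow_apply_mem τ D hx)).2,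
    fun i hi hlt hmem => Nat.find_min _ hlt ⟨hi, hmem⟩⟩

theorem returnTime_of_notMem (hx : x ∉ D) : returnTime τ D x = 0 := by
  simp [returnTime, hx]

theorem returnTime_le_of_pow_apply_eq (hx : x ∈ D) (hy : y ∈ D)
    (h : (τ ^ returnTime τ D x) x = (τ ^ returnTime τ D y) y) :
    returnTime τ D y ≤ returnTime τ D x := by
  by_contra! hlt
  have hpos := (returnTime_spec τ D hx).1
  have hyx : (τ ^ (returnTime τ D y - returnTime τ D x)) y = x := by
    apply (τ ^ returnTime τ D x).injective
    rw [← mul_apply, ← pow_add, Nat.add_sub_cancel' hlt.le, h]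
  exact (returnTime_spec τ D hy).2.2 _ (by omega) (by omega) (hyx ▸ hx)

theorem injective_pow_returnTime_apply :
    Function.Injective fun x => (τ ^ returnTime τ D x) x := by
  intro x y h
  by_cases hx : x ∈ D <;> by_cases hy : y ∈ D
  · have hxy := le_antisymm (returnTime_le_of_pow_apply_eq τ D hy hx h.symm)
      (returnTime_le_of_pow_apply_eq τ D hx hy h)
    simp only [hxy] at h
    exact (τ ^ returnTime τ D y).injective h
  · simp only [returnTime_of_notMem τ D hy, pow_zero, one_apply] at h
    exact absurd (h ▸ (returnTime_spec τ D hx).2.1) hy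
  · simp only [returnTime_of_notMem τ D hx, pow_zero, one_apply] at h
    exact absurd (h ▸ (returnTime_spec τ D hy).2.1) hx
  · simpa [returnTime_of_notMem τ D hx, returnTime_of_notMem τ D hy] using h

noncomputable def returnPerm : Perm α :=
  Equiv.ofBijective _ (injective_pow_returnTime_apply τ D).bijective_of_finite

theorem returnPerm_apply_of_notMem (hx : x ∉ D) : returnPerm τ D x = x := by
  simp [returnPerm, returnTime_of_notMem τ D hx]

theorem sameCycle_returnPerm : τ.SameCycle x (returnPerm τ D x) :=
  ⟨returnTime τ D x, by simp [returnPerm]⟩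

variable {τ D}

omit [Finite α] in
theorem mul_pow_apply_of_forall_notMem (hκ : ∀ x ∉ D, κ x = x) {k : ℕ} (hk : 0 < k)
    (h : ∀ i, 0 < i → i < k → (τ ^ i) x ∉ D) : ((κ * τ) ^ k) x = κ ((τ ^ k) x) := by
  induction k, hk using Nat.le_induction with
  | base => simp
  | succ k hk ih =>
    rw [pow_succ', mul_apply, ih fun i hi hik => h i hi (by omega),
      hκ _ (h k hk (by omega)), mul_apply, ← mul_apply τ, ← pow_succ']

theorem sameCycle_mul_apply_mul_returnPerm (hκ : ∀ x ∉ D, κ x = x) (hx : x ∈ D) :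
    (κ * τ).SameCycle x ((κ * returnPerm τ D) x) := by
  obtain ⟨hpos, -, hfirst⟩ := returnTime_spec τ D hx
  exact ⟨returnTime τ D x, by
    rw [zpow_natCast, mul_pow_apply_of_forall_notMem hκ hpos hfirst]; rfl⟩

theorem SameCycle.of_mul_returnPerm (hκ : ∀ x ∉ D, κ x = x)
    (h : (κ * returnPerm τ D).SameCycle x y) (hx : x ∈ D) : (κ * τ).SameCycle x y :=
  h.of_forall_sameCycle_apply
    (mapsTo_of_forall_notMem_apply_eq fun z hz => by
      rw [mul_apply, returnPerm_apply_of_notMem τ D hz, hκ z hz])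
    (fun _ hz => sameCycle_mul_apply_mul_returnPerm hκ hz) hx

/-- From the last visit of the `τ`-orbit of `y` to `D`, `κ * τ` follows `τ` up to `y`. -/
theorem exists_mem_sameCycle_mul (hκ : ∀ x ∉ D, κ x = x) {d : α} (hd : d ∈ D)
    (h : τ.SameCycle d y) : ∃ x ∈ D, τ.SameCycle x y ∧ (κ * τ).SameCycle x y := by
  classical
  have hex : ∃ j, ∃ x ∈ D, (τ ^ j) x = y := by
    obtain ⟨n, -, hn⟩ := h.exists_pow_eq'
    exact ⟨n, d, hd, hn⟩
  obtain ⟨x, hxD, hxy⟩ := Nat.find_spec hex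
  refine ⟨x, hxD, ⟨Nat.find hex, by simpa using hxy⟩, ?_⟩
  have hout : ∀ i, 0 < i → i ≤ Nat.find hex → (τ ^ i) x ∉ D := fun i hi hij hmem =>
    Nat.find_min hex (show Nat.find hex - i < Nat.find hex by omega)
      ⟨_, hmem, by rw [← mul_apply, ← pow_add, Nat.sub_add_cancel hij, hxy]⟩
  rcases Nat.eq_zero_or_pos (Nat.find hex) with hj | hj
  · rw [hj, pow_zero, one_apply] at hxy
    exact hxy ▸ .rfl
  · refine ⟨Nat.find hex, ?_⟩
    rw [zpow_natCast, mul_pow_apply_of_forall_notMem hκ hj fun i hi hij => hout i hi hij.le,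
      hκ _ (hout _ hj le_rfl), hxy]

theorem exists_returnPerm_ne_of_not_sameCycle {c : Perm α} (hc : IsCycleSupportedOn c D)
    {d₀ a x : α} (ha : a ∈ D) (hd₀a : τ.SameCycle d₀ a) (hx : x ∈ D) (hx' : ¬τ.SameCycle d₀ x) :
    ∃ x₀ ∈ D, ¬τ.SameCycle d₀ x₀ ∧ returnPerm τ D x₀ ≠ c x₀ := by
  by_contra! h
  have hmaps : Set.MapsTo c {y | y ∈ D ∧ ¬τ.SameCycle d₀ y} {y | y ∈ D ∧ ¬τ.SameCycle d₀ y} :=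
    fun y hy => ⟨hc.mapsTo hy.1, fun hcy => hy.2 <| hcy.trans <|
      (h y hy.1 hy.2 ▸ sameCycle_returnPerm τ D).symm⟩
  exact ((hc.2 x hx a ha).mem_of_mapsTo hmaps ⟨hx, hx'⟩).2 hd₀a

variable [DecidableEq α]

theorem sameCycle_mul_of_sameCycle_mul_returnPerm (hκ : ∀ x ∉ D, κ x = x) {d₀ a x₀ : α}
    (ha : a ∈ D) (hd₀a : τ.SameCycle d₀ a) (hx₀ : ¬τ.SameCycle d₀ x₀)
    (hκR : ∀ x ∈ D.erase x₀, ∀ y ∈ D.erase x₀, (κ * returnPerm τ D).SameCycle x y) :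
    (∀ y, τ.SameCycle d₀ y → (κ * τ).SameCycle d₀ y) ∧
      ∀ y ∈ D.erase x₀, (κ * τ).SameCycle d₀ y := by
  have hD : ∀ x ∈ D, τ.SameCycle d₀ x → x ∈ D.erase x₀ := fun x hx h =>
    mem_erase.2 ⟨fun e => hx₀ (by rwa [← e]), hx⟩
  have hA : ∀ y ∈ D.erase x₀, (κ * τ).SameCycle a y := fun y hy =>
    (hκR a (hD a ha hd₀a) y hy).of_mul_returnPerm hκ ha
  have hF : ∀ y, τ.SameCycle d₀ y → (κ * τ).SameCycle a y := by
    intro y hy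
    obtain ⟨x, hxD, hxy, hxy'⟩ := exists_mem_sameCycle_mul hκ ha (hd₀a.symm.trans hy)
    exact (hA x (hD x hxD (hy.trans hxy.symm))).trans hxy'
  have hd₀ := hF d₀ .rfl
  exact ⟨fun y hy => hd₀.symm.trans (hF y hy), fun y hy => hd₀.symm.trans (hA y hy)⟩

end ReturnPerm

end Equiv.Perm

open Equiv.Perm SimpleGraph

section RotationSystem

variable {V : Type*} {G : SimpleGraph V}

theorem faceTracing_apply (σ : Perm G.Dart) (d : G.Dart) : faceTracing G σ d = σ d.symm := rfl

theorem faceTracing_mul (κ σ : Perm G.Dart) : faceTracing G (κ * σ) = κ * faceTracing G σ :=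
  Equiv.ext fun _ => rfl

theorem exists_dart_fst_eq_edge {e : Sym2 V} (he : e ∈ G.edgeSet) {v : V} (hv : v ∈ e) :
    ∃ d : G.Dart, d.fst = v ∧ d.edge = e := by
  induction e using Sym2.ind with
  | _ x y =>
    rw [mem_edgeSet] at he
    rcases Sym2.mem_iff.1 hv with rfl | rfl
    exacts [⟨⟨(v, y), he⟩, rfl, rfl⟩, ⟨⟨(v, x), he.symm⟩, rfl, Sym2.eq_swap⟩]

theorem IsRotationSystem.exists_sameCycle_fst_eq {σ : Perm G.Dart} (hσ : IsRotationSystem G σ)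
    {d₀ d : G.Dart} (hd : (faceTracing G σ).SameCycle d₀ d) {v : V} (hv : v ∈ d.edge) :
    ∃ a, (faceTracing G σ).SameCycle d₀ a ∧ a.fst = v := by
  rcases Sym2.mem_iff.1 hv with rfl | rfl
  · exact ⟨d, hd, rfl⟩
  · exact ⟨faceTracing G σ d, hd.trans ⟨1, rfl⟩, hσ.1 d.symm⟩

variable [Fintype V] [DecidableEq V] [DecidableRel G.Adj]

def dartsAt (G : SimpleGraph V) [DecidableRel G.Adj] (v : V) : Finset G.Dart :=
  {d | d.fst = v}

@[simp]
theorem mem_dartsAt {v : V} {d : G.Dart} : d ∈ dartsAt G v ↔ d.fst = v := by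
  simp [dartsAt]

variable {σ : Perm G.Dart}

theorem IsRotationSystem.exists_isCycleSupportedOn (hσ : IsRotationSystem G σ) (v : V) :
    ∃ c : Perm G.Dart, c.IsCycleSupportedOn (dartsAt G v) ∧ ∀ d ∈ dartsAt G v, c d = σ d := by
  have hσv : ∀ d, σ d ∈ dartsAt G v ↔ d ∈ dartsAt G v := fun d => by simp [hσ.1 d]
  set c := ofSubtype (σ.subtypePerm hσv)
  have hc : ∀ d ∈ dartsAt G v, c d = σ d := fun d hd => ofSubtype_apply_of_mem _ hd
  refine ⟨c, ⟨fun d hd => ofSubtype_apply_of_not_mem _ hd, fun d hd d' hd' => ?_⟩, hc⟩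
  exact (hσ.2 d d' ((mem_dartsAt.1 hd).trans (mem_dartsAt.1 hd').symm)).of_eqOn
    (fun x hx => (hσv x).2 hx) hc hd

theorem isRotationSystem_of_forall_exists_isCycleSupportedOn
    (hfst : ∀ d, (σ d).fst = d.fst)
    (hcyc : ∀ v, ∃ c : Perm G.Dart, c.IsCycleSupportedOn (dartsAt G v) ∧
      ∀ d ∈ dartsAt G v, σ d = c d) :
    IsRotationSystem G σ := by
  refine ⟨hfst, fun d d' hdd' => ?_⟩
  obtain ⟨c, hc, hσc⟩ := hcyc d.fst
  exact (hc.2 d (by simp) d' (by simp [hdd'])).of_eqOn hc.mapsTo hσc (by simp)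

theorem exists_isRotationSystem : ∃ σ : Perm G.Dart, IsRotationSystem G σ := by
  choose c hc using fun v => exists_isCycleSupportedOn (dartsAt G v)
  have hfst : ∀ d : G.Dart, (c d.fst d).fst = d.fst := fun d =>
    mem_dartsAt.1 ((hc d.fst).mapsTo (mem_dartsAt.2 rfl))
  have hinj : Function.Injective fun d : G.Dart => c d.fst d := fun d d' h => by
    have h' : d.fst = d'.fst := by rw [← hfst d, ← hfst d']; exact congrArg (·.fst) h
    simp only [h'] at h
    exact (c d'.fst).injective h
  refine ⟨Equiv.ofBijective _ hinj.bijective_of_finite,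
    isRotationSystem_of_forall_exists_isCycleSupportedOn hfst fun v => ⟨c v, hc v, ?_⟩⟩
  intro d hd
  rw [mem_dartsAt] at hd
  subst hd
  rfl

theorem IsRotationSystem.mul (hσ : IsRotationSystem G σ) {v : V} {κ c : Perm G.Dart}
    (hκ : ∀ d ∉ dartsAt G v, κ d = d) (hc : ∀ d ∈ dartsAt G v, c d = σ d)
    (hκc : (κ * c).IsCycleSupportedOn (dartsAt G v)) : IsRotationSystem G (κ * σ) := by
  refine isRotationSystem_of_forall_exists_isCycleSupportedOn (fun d => ?_) fun u => ?_
  · by_cases h : σ d ∈ dartsAt G v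
    · rw [mul_apply, mem_dartsAt.1 (mapsTo_of_forall_notMem_apply_eq hκ h),
        ← mem_dartsAt.1 h, hσ.1]
    · rw [mul_apply, hκ _ h, hσ.1]
  · rcases eq_or_ne u v with rfl | huv
    · exact ⟨κ * c, hκc, fun d hd => by rw [mul_apply, mul_apply, hc d hd]⟩
    · obtain ⟨c', hc', hc'σ⟩ := hσ.exists_isCycleSupportedOn u
      refine ⟨c', hc', fun d hd => ?_⟩
      rw [mul_apply, hκ _ (by simpa [hσ.1] using ne_of_eq_of_ne (mem_dartsAt.1 hd) huv),
        hc'σ d hd]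

theorem IsRotationSystem.exists_face_superset_covering_dartsAt (hσ : IsRotationSystem G σ)
    {d₀ a : G.Dart} (ha : (faceTracing G σ).SameCycle d₀ a) :
    ∃ σ', IsRotationSystem G σ' ∧
      (∀ d, (faceTracing G σ).SameCycle d₀ d → (faceTracing G σ').SameCycle d₀ d) ∧
      ∀ d ∈ dartsAt G a.fst, ∃ d', d'.edge = d.edge ∧ (faceTracing G σ').SameCycle d₀ d' := by
  set τ := faceTracing G σ
  set D := dartsAt G a.fst
  by_cases hall : ∀ x ∈ D, τ.SameCycle d₀ x
  · exact ⟨σ, hσ, fun _ h => h, fun d hd => ⟨d, rfl, hall d hd⟩⟩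
  obtain ⟨x, hxD, hx⟩ := not_forall₂.1 hall
  have haD : a ∈ D := mem_dartsAt.2 rfl
  obtain ⟨c, hc, hcσ⟩ := hσ.exists_isCycleSupportedOn a.fst
  obtain ⟨x₀, hx₀D, hx₀, hRx₀⟩ := exists_returnPerm_ne_of_not_sameCycle hc haD ha hxD hx
  obtain ⟨κ, hκ, hκc, hκR⟩ := exists_mul_isCycleSupportedOn_of_apply_ne hc
    (fun _ => returnPerm_apply_of_notMem τ D) hRx₀
  obtain ⟨hF, hD⟩ := sameCycle_mul_of_sameCycle_mul_returnPerm hκ haD ha hx₀ hκR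
  refine ⟨κ * σ, hσ.mul hκ hcσ hκc, by rwa [faceTracing_mul], fun d hd => ?_⟩
  rw [faceTracing_mul]
  by_cases hdx₀ : d = x₀
  · -- `x₀` may be cut off, but its reverse is followed by `(κ * σ) x₀ ≠ x₀` on the new face.
    subst hdx₀
    have hne : (κ * c) d ≠ d := hκc.apply_ne_self hx₀D haD fun e => hx₀ (e ▸ ha)
    have hstep : (κ * τ) d.symm = (κ * c) d := by
      simp [τ, faceTracing_apply, hcσ d hx₀D]
    exact ⟨d.symm, d.edge_symm,
      sameCycle_apply_right.1 (hstep ▸ hD _ (mem_erase.2 ⟨hne, hκc.mapsTo hx₀D⟩))⟩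
  · exact ⟨d, rfl, hD d (mem_erase.2 ⟨hdx₀, hd⟩)⟩

end RotationSystem

section Growth

variable {V : Type*} [Fintype V] {G : SimpleGraph V}

def FaceCoversEdgesAt (σ : Perm G.Dart) (d₀ : G.Dart) (S : Finset V) : Prop :=
  ∀ e ∈ G.edgeSet, (∃ v ∈ e, v ∈ S) →
    ∃ d : G.Dart, d.edge = e ∧ (faceTracing G σ).SameCycle d₀ d

theorem IsRotationSystem.exists_faceCoversEdgesAt_insert [DecidableEq V] {σ : Perm G.Dart}
    (hσ : IsRotationSystem G σ) {d₀ a : G.Dart} {S : Finset V}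
    (hS : FaceCoversEdgesAt σ d₀ S) (ha : (faceTracing G σ).SameCycle d₀ a) :
    ∃ σ', IsRotationSystem G σ' ∧ FaceCoversEdgesAt σ' d₀ (insert a.fst S) := by
  classical
  obtain ⟨σ', hσ', hF, hdarts⟩ := hσ.exists_face_superset_covering_dartsAt ha
  refine ⟨σ', hσ', fun e he ⟨v, hve, hv⟩ => ?_⟩
  rcases mem_insert.1 hv with rfl | hv
  · obtain ⟨d, hd, rfl⟩ := exists_dart_fst_eq_edge he hve
    exact hdarts d (mem_dartsAt.2 hd)
  · obtain ⟨d, rfl, hd⟩ := hS e he ⟨v, hve, hv⟩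
    exact ⟨d, rfl, hF d hd⟩

theorem exists_isRotationSystem_faceCoversEdgesAt_univ (hconn : G.Connected) (d₀ : G.Dart) :
    ∃ σ, IsRotationSystem G σ ∧ FaceCoversEdgesAt σ d₀ univ := by
  classical
  let good : Finset (Finset V) :=
    univ.filter fun S => d₀.fst ∈ S ∧ ∃ σ, IsRotationSystem G σ ∧ FaceCoversEdgesAt σ d₀ S
  have hgood : {d₀.fst} ∈ good := by
    obtain ⟨σ, hσ⟩ := exists_isRotationSystem (G := G)
    obtain ⟨σ', hσ', h⟩ := hσ.exists_faceCoversEdgesAt_insert (S := ∅)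
      (fun _ _ ⟨_, _, hv⟩ => absurd hv (notMem_empty _)) (.refl _ d₀)
    exact mem_filter.2 ⟨mem_univ _, mem_singleton_self _, σ', hσ', h⟩
  obtain ⟨S, hS, hmax⟩ := good.exists_max_image card ⟨_, hgood⟩
  obtain ⟨-, hd₀S, σ, hσ, hσS⟩ := mem_filter.1 hS
  suffices hSuniv : S = univ from ⟨σ, hσ, hSuniv ▸ hσS⟩
  by_contra hne
  obtain ⟨w, hw⟩ : ∃ w, w ∉ S := by
    by_contra! h
    exact hne (eq_univ_iff_forall.2 h)
  obtain ⟨p⟩ := hconn.preconnected d₀.fst w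
  obtain ⟨⟨⟨s, w'⟩, hsw'⟩, -, hs, hw'⟩ := p.exists_boundary_dart S hd₀S hw
  obtain ⟨d, hd, hd₀d⟩ := hσS s(s, w') hsw' ⟨s, Sym2.mem_mk_left _ _, hs⟩
  obtain ⟨a, ha, rfl⟩ := hσ.exists_sameCycle_fst_eq hd₀d (hd ▸ Sym2.mem_mk_right s w')
  obtain ⟨σ', hσ', h⟩ := hσ.exists_faceCoversEdgesAt_insert hσS ha
  have hcard := hmax _ (mem_filter.2 ⟨mem_univ _, mem_insert_of_mem hd₀S, σ', hσ', h⟩)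
  rw [card_insert_of_notMem hw'] at hcard
  omega

end Growth

/-- Every finite connected simple graph with at least one edge has a rotation system with a
single face (orbit of the face-tracing permutation) containing at least one dart of every
edge, i.e. an edge-outer orientable embedding. -/
theorem edge_outer_embedding_exists {V : Type*} [Fintype V] (G : SimpleGraph V)
    (hconn : G.Connected) (hne : G.edgeSet.Nonempty) :
    ∃ σ : Equiv.Perm G.Dart, IsRotationSystem G σ ∧
      ∃ d₀ : G.Dart, ∀ e ∈ G.edgeSet, ∃ d : G.Dart,
        d.edge = e ∧ (faceTracing G σ).SameCycle d₀ d := by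
  obtain ⟨e, he⟩ := hne
  obtain ⟨d₀, -, -⟩ := exists_dart_fst_eq_edge he (Sym2.out_fst_mem e)
  obtain ⟨σ, hσ, hcover⟩ := exists_isRotationSystem_faceCoversEdgesAt_univ hconn d₀
  exact ⟨σ, hσ, d₀, fun e he => hcover e he ⟨_, Sym2.out_fst_mem e, mem_univ _⟩⟩
end

section
/- Let G be a finite connected simple graph with at least one edge. Then there exists a rotation system σ on G such that (i) some single orbit of the face-tracing permutation of σ contains at least one dart of every edge of G, and (ii) the number of orbits of the face-tracing permutation of σ is minimum over all rotation systems on G (by Euler's formula, this means the corresponding orientable embedding has maximum orientable genus). -/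
open SimpleGraph

/-- The number of orbits of a permutation `f` of a finite type (for the face-tracing
permutation of a rotation system, this is the number of faces of the embedding). -/
noncomputable def numOrbits {α : Type*} (f : Equiv.Perm α) : ℕ :=
  Nat.card (Quotient (Setoid.mk f.SameCycle
    ⟨fun x => Equiv.Perm.SameCycle.refl f x, fun h => h.symm, fun h h' => h.trans h'⟩))

/-! Take a rotation system `σ` with the fewest faces and, among all such, a face `F` of maximal
size. For darts `a, y, o` at one vertex, `π = swap a y * swap y o` is the 3-cycle `a ↦ y ↦ o ↦ a`,
and replacing `σ` by `π * σ` replaces the face permutation `τ` by `π * τ`; for one of the two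
orders of `y, o` the new rotation is still a single cycle at the vertex. If `a, y, o` lay on three
distinct faces, `π * τ` would have fewer faces, so no vertex meets three faces. If `F` contains a
dart `a` at `v` but neither dart of the edge of a dart `b` at `v`, then `σ b = τ b.symm` is not on
`F`, hence lies on the face of `b`, and the 3-cycle on `a, b, σ b` enlarges `F` without adding
faces. Thus every dart at a vertex of `F` lies on `F` or has its reverse there, and connectivity
spreads this to every edge. -/

open Equiv Equiv.Perm

namespace Setoid

variable {α : Type*} [Finite α] {r s : Setoid α}

theorem card_quotient_lt_of_le (hrs : r ≤ s) {x y : α} (hs : s x y) (hr : ¬ r x y) :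
    Nat.card (Quotient s) < Nat.card (Quotient r) := by
  have hsurj : Function.Surjective (map_of_le hrs) := Quotient.ind fun a => ⟨⟦a⟧, rfl⟩
  refine (Nat.card_le_card_of_surjective _ hsurj).lt_of_ne fun hcard => hr <| Quotient.exact <|
    ((Nat.bijective_iff_surjective_and_card _).2 ⟨hsurj, hcard.symm⟩).1 (Quotient.sound hs)

theorem card_quotient_le_card_add_one (hrs : r ≤ s) (y : α)
    (h : ∀ u v, ¬ r u y → ¬ r v y → s u v → r u v) :
    Nat.card (Quotient r) ≤ Nat.card (Quotient s) + 1 := by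
  classical
  let F : Quotient r → Option (Quotient s) := fun q =>
    if q = ⟦y⟧ then none else some (map_of_le hrs q)
  have hF : F.Injective := by
    refine Quotient.ind₂ fun u v huv => ?_
    by_cases hu : r u y <;> by_cases hv : r v y
    · exact Quotient.sound (r.trans hu (r.symm hv))
    all_goals simp_all [F, Quotient.eq, map_of_le]
  simpa using Nat.card_le_card_of_injective F hF

end Setoid

namespace Equiv.Perm

variable {α : Type*} {f π : Perm α} {s : Set α} {a o u v w x y : α}

theorem mul_pow_apply_of_forall_fixed {n : ℕ}
    (h : ∀ i, 0 < i → i ≤ n → π ((f ^ i) u) = (f ^ i) u) :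
    ((π * f) ^ n) u = (f ^ n) u := by
  induction n with
  | zero => rfl
  | succ n ih =>
    rw [pow_succ', mul_apply, ih fun i hi hin => h i hi (by omega), mul_apply, ← mul_apply f,
      ← pow_succ', h _ n.succ_pos le_rfl]

theorem mul_pow_succ_apply_of_forall_fixed {n : ℕ}
    (h : ∀ i, 0 < i → i ≤ n → π ((f ^ i) u) = (f ^ i) u) :
    ((π * f) ^ (n + 1)) u = π ((f ^ (n + 1)) u) := by
  rw [pow_succ', mul_apply, mul_pow_apply_of_forall_fixed h, mul_apply, ← mul_apply f,
    ← pow_succ']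

theorem swap_apply_of_not_sameCycle [DecidableEq α] (hx : ¬ f.SameCycle u x)
    (hy : ¬ f.SameCycle u y) (hw : f.SameCycle u w) : swap x y w = w :=
  swap_apply_of_ne_of_ne (by rintro rfl; exact hx hw) (by rintro rfl; exact hy hw)

variable [Finite α]

theorem SameCycle.mem_of_mapsTo_s1 (hs : Set.MapsTo f s s) (hu : u ∈ s) (h : f.SameCycle u v) :
    v ∈ s := by
  obtain ⟨n, rfl⟩ := h.exists_nat_pow_eq
  rw [coe_pow]
  exact hs.iterate n hu

theorem SameCycle.exists_pow_eq_of_pow_eq_self {n : ℕ} (hn : 0 < n) (hper : (f ^ n) u = u)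
    (h : f.SameCycle u v) : ∃ i < n, (f ^ i) u = v := by
  obtain ⟨k, rfl⟩ := h.exists_nat_pow_eq
  have hper' : Function.IsPeriodicPt f n u := by
    change f^[n] u = u
    rwa [← coe_pow]
  exact ⟨k % n, Nat.mod_lt _ hn, by rw [coe_pow, coe_pow, hper'.iterate_mod_apply]⟩

theorem SameCycle.of_mul (h : (π * f).SameCycle u v)
    (hπ : ∀ w, f.SameCycle u w → f.SameCycle u (π w)) : f.SameCycle u v :=
  h.mem_of_mapsTo_s1 (s := {w | f.SameCycle u w})
    (fun _ hw => hπ (f _) (sameCycle_apply_right.2 hw)) (SameCycle.refl f u)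

theorem sameCycle_mul_iff_of_forall_fixed (hπ : ∀ w, f.SameCycle u w → π w = w) :
    (π * f).SameCycle u v ↔ f.SameCycle u v := by
  refine ⟨fun h => h.of_mul fun w hw => by rwa [hπ w hw], fun h => ?_⟩
  obtain ⟨n, rfl⟩ := h.exists_nat_pow_eq
  rw [← mul_pow_apply_of_forall_fixed fun i _ _ => hπ _ (sameCycle_pow_right.2 (.refl f u))]
  exact sameCycle_pow_right.2 (.refl _ u)

theorem exists_sameCycle_mul_apply (hπ : ∀ w ∉ s, π w = w) (hx : x ∈ s)
    (hux : f.SameCycle u x) :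
    ∃ t ∈ s, f.SameCycle u t ∧ (π * f).SameCycle u (π t) := by
  classical
  have hex : ∃ n, 0 < n ∧ (f ^ n) u ∈ s := by
    obtain ⟨n, hn, -, rfl⟩ := hux.exists_pow_eq''
    exact ⟨n, hn, hx⟩
  obtain ⟨hpos, hmem⟩ := Nat.find_spec hex
  obtain ⟨m, hm⟩ := Nat.exists_eq_add_one_of_ne_zero hpos.ne'
  have hfix : ∀ i, 0 < i → i ≤ m → π ((f ^ i) u) = (f ^ i) u := fun i hi him =>
    hπ _ fun hs => Nat.find_min hex (by omega) ⟨hi, hs⟩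
  refine ⟨_, hmem, sameCycle_pow_right.2 (.refl f u), ?_⟩
  rw [hm, ← mul_pow_succ_apply_of_forall_fixed hfix]
  exact sameCycle_pow_right.2 (.refl _ u)

variable [DecidableEq α]

theorem sameCycle_swap_mul_iff (hx : ¬ f.SameCycle u x) (hy : ¬ f.SameCycle u y) :
    (swap x y * f).SameCycle u v ↔ f.SameCycle u v :=
  sameCycle_mul_iff_of_forall_fixed fun _ => swap_apply_of_not_sameCycle hx hy

theorem exists_sameCycle_swap_mul_apply (h : f.SameCycle u x ∨ f.SameCycle u y) :
    ∃ t, (t = x ∨ t = y) ∧ f.SameCycle u t ∧ (swap x y * f).SameCycle u (swap x y t) := by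
  have hπ : ∀ w ∉ ({x, y} : Set α), swap x y w = w := fun w hw => by
    simp only [Set.mem_insert_iff, Set.mem_singleton_iff, not_or] at hw
    exact swap_apply_of_ne_of_ne hw.1 hw.2
  exact h.elim (exists_sameCycle_mul_apply hπ (Set.mem_insert x _))
    (exists_sameCycle_mul_apply hπ (Set.mem_insert_of_mem x rfl))

theorem swap_mul_sameCycle_or (h : f.SameCycle u x ∨ f.SameCycle u y) :
    (swap x y * f).SameCycle u x ∨ (swap x y * f).SameCycle u y := by
  obtain ⟨t, rfl | rfl, -, hut⟩ := exists_sameCycle_swap_mul_apply h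
  · exact .inr (by rwa [swap_apply_left] at hut)
  · exact .inl (by rwa [swap_apply_right] at hut)

theorem swap_mul_sameCycle_of_not_sameCycle (h : ¬ f.SameCycle x y) :
    (swap x y * f).SameCycle x y := by
  obtain ⟨t, rfl | rfl, hxt, hgt⟩ :=
    exists_sameCycle_swap_mul_apply (y := y) (.inl (.refl f x))
  · rwa [swap_apply_left] at hgt
  · exact absurd hxt h

theorem swap_mul_sameCycle_of_sameCycle_or (h : ¬ f.SameCycle x y)
    (hu : f.SameCycle u x ∨ f.SameCycle u y) : (swap x y * f).SameCycle u x :=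
  (swap_mul_sameCycle_or hu).elim id fun h' =>
    h'.trans (swap_mul_sameCycle_of_not_sameCycle h).symm

theorem not_sameCycle_swap_mul (hxy : f.SameCycle x y) (hne : x ≠ y) :
    ¬ (swap x y * f).SameCycle x y := by
  -- Up to the first time `n` at which the `f`-orbit of `x` meets `{x, y}`, which is a visit to
  -- `y`, the permutation `swap x y * f` follows `f`; at time `n` it is back at `x`.
  have hex : ∃ n, 0 < n ∧ ((f ^ n) x = x ∨ (f ^ n) x = y) :=
    ⟨orderOf f, orderOf_pos f, .inl (by rw [pow_orderOf_eq_one, one_apply])⟩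
  obtain ⟨hpos, hhit⟩ := Nat.find_spec hex
  have hbefore : ∀ i < Nat.find hex, (f ^ i) x ≠ y := by
    intro i hi hiy
    rcases Nat.eq_zero_or_pos i with rfl | hi0
    · exact hne hiy
    · exact Nat.find_min hex hi ⟨hi0, .inr hiy⟩
  have hfix : ∀ i, 0 < i → i < Nat.find hex → swap x y ((f ^ i) x) = (f ^ i) x :=
    fun i hi hin => swap_apply_of_ne_of_ne (fun h => Nat.find_min hex hin ⟨hi, .inl h⟩)
      (hbefore i hin)
  have hy : (f ^ Nat.find hex) x = y := hhit.resolve_left fun hx => by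
    obtain ⟨i, hi, hiy⟩ := hxy.exists_pow_eq_of_pow_eq_self hpos hx
    exact hbefore i hi hiy
  obtain ⟨m, hm⟩ := Nat.exists_eq_add_one_of_ne_zero hpos.ne'
  have hret : ((swap x y * f) ^ Nat.find hex) x = x := by
    rw [hm, mul_pow_succ_apply_of_forall_fixed fun i hi him => hfix i hi (by omega), ← hm, hy,
      swap_apply_right]
  intro hg
  obtain ⟨i, hi, hiy⟩ := hg.exists_pow_eq_of_pow_eq_self hpos hret
  rw [mul_pow_apply_of_forall_fixed fun j hj hji => hfix j hj (by omega)] at hiy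
  exact hbefore i hi hiy

theorem numOrbits_swap_mul_lt (h : ¬ f.SameCycle x y) :
    numOrbits (swap x y * f) < numOrbits f := by
  refine Setoid.card_quotient_lt_of_le (r := SameCycle.setoid f)
    (s := SameCycle.setoid (swap x y * f)) (fun u v huv => ?_)
    (swap_mul_sameCycle_of_not_sameCycle h) h
  by_cases hu : f.SameCycle u x ∨ f.SameCycle u y
  · have hv : f.SameCycle v x ∨ f.SameCycle v y := hu.imp huv.symm.trans huv.symm.trans
    exact (swap_mul_sameCycle_of_sameCycle_or h hu).trans
      (swap_mul_sameCycle_of_sameCycle_or h hv).symm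
  · rw [not_or] at hu
    exact (sameCycle_swap_mul_iff hu.1 hu.2).2 huv

theorem numOrbits_swap_mul_le (h : f.SameCycle x y) :
    numOrbits (swap x y * f) ≤ numOrbits f + 1 := by
  refine Setoid.card_quotient_le_card_add_one (r := SameCycle.setoid (swap x y * f))
    (s := SameCycle.setoid f) (fun u v huv => huv.of_mul fun w hw => ?_) y
    fun u v hu hv huv => ?_
  · rw [swap_apply_def]
    split_ifs with hwx hwy
    · exact (hwx ▸ hw).trans h
    · exact (hwy ▸ hw).trans h.symm
    · exact hw
  · by_cases hux : f.SameCycle u x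
    · exact ((swap_mul_sameCycle_or (.inl hux)).resolve_right hu).trans
        ((swap_mul_sameCycle_or (.inl (huv.symm.trans hux))).resolve_right hv).symm
    · exact (sameCycle_swap_mul_iff hux fun huy => hux (huy.trans h.symm)).2 huv

theorem numOrbits_swap_mul_swap_mul_lt (hay : ¬ f.SameCycle a y) (hao : ¬ f.SameCycle a o)
    (hyo : ¬ f.SameCycle y o) : numOrbits (swap a y * (swap y o * f)) < numOrbits f :=
  (numOrbits_swap_mul_lt (by rwa [sameCycle_swap_mul_iff hay hao])).trans
    (numOrbits_swap_mul_lt hyo)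

theorem numOrbits_swap_mul_swap_mul_le (hay : ¬ f.SameCycle a y) (hyo : f.SameCycle y o) :
    numOrbits (swap a y * (swap y o * f)) ≤ numOrbits f := by
  have hao : ¬ f.SameCycle a o := fun h => hay (h.trans hyo.symm)
  have hmerge := numOrbits_swap_mul_lt (x := a) (y := y) (f := swap y o * f)
    (by rwa [sameCycle_swap_mul_iff hay hao])
  have hsplit := numOrbits_swap_mul_le hyo
  omega

theorem setOf_sameCycle_ssubset_swap_mul_swap_mul (hay : ¬ f.SameCycle a y)
    (hyo : f.SameCycle y o) :
    {u | f.SameCycle a u} ⊂ {u | (swap a y * (swap y o * f)).SameCycle a u} := by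
  have hao : ¬ f.SameCycle a o := fun h => hay (h.trans hyo.symm)
  have hsep : ¬ (swap y o * f).SameCycle a y := by rwa [sameCycle_swap_mul_iff hay hao]
  refine Set.ssubset_iff_insert.2 ⟨y, hay, Set.insert_subset_iff.2
    ⟨swap_mul_sameCycle_of_not_sameCycle hsep, fun u hu => ?_⟩⟩
  exact (swap_mul_sameCycle_of_sameCycle_or hsep
    (.inl ((sameCycle_swap_mul_iff hay hao).2 hu).symm)).symm

end Equiv.Perm

namespace SimpleGraph

variable {V : Type*} {G : SimpleGraph V} {σ : Perm G.Dart}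

instance [Finite V] : Finite G.Dart := Finite.of_injective _ Dart.toProd_injective

theorem faceTracing_mul (π σ : Perm G.Dart) :
    faceTracing G (π * σ) = π * faceTracing G σ := rfl

theorem sameCycle_faceTracing_symm_apply (d : G.Dart) :
    (faceTracing G σ).SameCycle d.symm (σ d) :=
  ⟨1, by simp [faceTracing, dartRev]⟩

theorem fst_swap_apply [DecidableEq G.Dart] {a b : G.Dart} (hab : a.fst = b.fst) (d : G.Dart) :
    (swap a b d).fst = d.fst := by
  rw [swap_apply_def]
  split_ifs with ha hb
  · rw [ha, hab]
  · rw [hb, hab]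
  · rfl

variable (G) in
def IsMaxGenusRotationSystem (σ : Perm G.Dart) : Prop :=
  IsRotationSystem G σ ∧
    ∀ σ', IsRotationSystem G σ' →
      numOrbits (faceTracing G σ) ≤ numOrbits (faceTracing G σ')

theorem forall_mem_edgeSet_exists_sameCycle (hconn : G.Connected) (hσ : IsRotationSystem G σ)
    {d₀ : G.Dart}
    (hclosed : ∀ a b : G.Dart, a.fst = b.fst → (faceTracing G σ).SameCycle d₀ a →
      (faceTracing G σ).SameCycle d₀ b ∨ (faceTracing G σ).SameCycle d₀ b.symm) :
    ∀ e ∈ G.edgeSet, ∃ d : G.Dart, d.edge = e ∧ (faceTracing G σ).SameCycle d₀ d := by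
  have hvert : ∀ v, ∃ a : G.Dart, a.fst = v ∧ (faceTracing G σ).SameCycle d₀ a := by
    intro v
    induction (reachable_iff_reflTransGen _ _).1 (hconn.preconnected d₀.fst v) with
    | refl => exact ⟨d₀, rfl, .refl _ _⟩
    | @tail u w _ hadj ih =>
      obtain ⟨a, rfl, ha⟩ := ih
      rcases hclosed a ⟨(a.fst, w), hadj⟩ rfl ha with h | h
      · exact ⟨_, hσ.1 _, h.trans (sameCycle_apply_right.2 (.refl _ _))⟩
      · exact ⟨_, rfl, h⟩
  intro e he
  induction e using Sym2.ind with
  | _ v w =>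
    obtain ⟨a, rfl, ha⟩ := hvert v
    rcases hclosed a ⟨(a.fst, w), he⟩ rfl ha with h | h
    · exact ⟨_, rfl, h⟩
    · exact ⟨_, Dart.edge_symm _, h⟩

variable [Finite V]

theorem exists_isRotationSystem (G : SimpleGraph V) : ∃ σ, IsRotationSystem G σ := by
  classical
  have := Fintype.ofFinite G.Dart
  choose c hc using fun v : V =>
    (Finset.univ : Finset {d : G.Dart // d.fst = v}).exists_cycleOn
  let σ : Perm G.Dart := (Equiv.sigmaFiberEquiv fun d : G.Dart => d.fst).permCongr
    (Perm.sigmaCongrRight c)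
  have hσ : ∀ v (d : {d : G.Dart // d.fst = v}), σ d = c v d := by
    rintro v ⟨d, rfl⟩
    rfl
  refine ⟨σ, fun d => by rw [hσ d.fst ⟨d, rfl⟩]; exact (c _ _).2, fun d d' hdd' => ?_⟩
  obtain ⟨n, hn⟩ := ((hc d.fst).1.2 (Finset.mem_coe.2 (Finset.mem_univ ⟨d, rfl⟩))
    (Finset.mem_coe.2 (Finset.mem_univ ⟨d', hdd'.symm⟩))).exists_nat_pow_eq
  have hpow : ∀ (m : ℕ) (e : {e : G.Dart // e.fst = d.fst}), (σ ^ m) e = (c d.fst ^ m) e := by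
    intro m
    induction m with
    | zero => exact fun _ => rfl
    | succ m ih => intro e; rw [pow_succ', mul_apply, ih, hσ, pow_succ', mul_apply]
  exact ⟨n, by rw [zpow_natCast]; exact (hpow n ⟨d, rfl⟩).trans (congrArg Subtype.val hn)⟩

namespace IsRotationSystem

theorem fst_eq_of_sameCycle (hσ : IsRotationSystem G σ) {d d' : G.Dart} (h : σ.SameCycle d d') :
    d'.fst = d.fst :=
  h.mem_of_mapsTo_s1 (s := {e : G.Dart | e.fst = d.fst}) (fun e he => (hσ.1 e).trans he) rfl

theorem swap_mul_swap_mul [DecidableEq G.Dart] (hσ : IsRotationSystem G σ) {a y o : G.Dart}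
    (hay : a.fst = y.fst) (hao : a.fst = o.fst) (hsep : ¬ (swap y o * σ).SameCycle a y) :
    IsRotationSystem G (swap a y * swap y o * σ) := by
  rw [mul_assoc]
  refine ⟨fun d => by rw [mul_apply, fst_swap_apply hay, mul_apply,
    fst_swap_apply (hay.symm.trans hao), hσ.1], fun d d' hdd' => ?_⟩
  by_cases hv : d.fst = a.fst
  · have hao' : (swap y o * σ).SameCycle a o :=
      (swap_mul_sameCycle_or (.inl (hσ.2 a y hay))).resolve_left hsep
    have key : ∀ e : G.Dart, e.fst = a.fst → (swap a y * (swap y o * σ)).SameCycle e a := by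
      intro e he
      rcases swap_mul_sameCycle_or (.inl (hσ.2 e y (he.trans hay))) with h | h
      · exact swap_mul_sameCycle_of_sameCycle_or hsep (.inr h)
      · exact swap_mul_sameCycle_of_sameCycle_or hsep (.inl (h.trans hao'.symm))
    exact (key d hv).trans (key d' (hdd'.symm.trans hv)).symm
  · have away : ∀ e, e.fst = a.fst → ¬ σ.SameCycle d e := fun e he h =>
      hv ((hσ.fst_eq_of_sameCycle h).symm.trans he)
    have hy := away y hay.symm
    have ho := away o hao.symm
    refine (sameCycle_swap_mul_iff ?_ ?_).2 ((sameCycle_swap_mul_iff hy ho).2 (hσ.2 d d' hdd'))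
    · rw [sameCycle_swap_mul_iff hy ho]; exact away a rfl
    · rwa [sameCycle_swap_mul_iff hy ho]

theorem exists_swap_mul_swap_mul [DecidableEq G.Dart] (hσ : IsRotationSystem G σ)
    {a b z : G.Dart} (hab : a.fst = b.fst) (haz : a.fst = z.fst) (hbz : b ≠ z) :
    ∃ y o, ((y = b ∧ o = z) ∨ (y = z ∧ o = b)) ∧
      IsRotationSystem G (swap a y * swap y o * σ) := by
  -- `swap b z * σ` separates `b` from `z`, so `a` is separated from one of them.
  have hsplit := not_sameCycle_swap_mul (hσ.2 b z (hab.symm.trans haz)) hbz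
  by_cases hb : (swap b z * σ).SameCycle a b
  · refine ⟨z, b, .inr ⟨rfl, rfl⟩, hσ.swap_mul_swap_mul haz hab ?_⟩
    rw [swap_comm]
    exact fun hz => hsplit (hb.symm.trans hz)
  · exact ⟨b, z, .inl ⟨rfl, rfl⟩, hσ.swap_mul_swap_mul hab haz hb⟩

end IsRotationSystem

namespace IsMaxGenusRotationSystem

theorem sameCycle_of_fst_eq (hσ : IsMaxGenusRotationSystem G σ) {a b z : G.Dart}
    (hab : a.fst = b.fst) (haz : a.fst = z.fst) (hb : ¬ (faceTracing G σ).SameCycle a b)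
    (hz : ¬ (faceTracing G σ).SameCycle a z) : (faceTracing G σ).SameCycle b z := by
  classical
  by_contra hbz
  obtain ⟨y, o, hyo, hrot⟩ :=
    hσ.1.exists_swap_mul_swap_mul hab haz fun h => hbz (h ▸ .refl _ _)
  have hle := hσ.2 _ hrot
  rw [faceTracing_mul, mul_assoc] at hle
  refine hle.not_gt ?_
  rcases hyo with ⟨rfl, rfl⟩ | ⟨rfl, rfl⟩
  · exact numOrbits_swap_mul_swap_mul_lt hb hz hbz
  · exact numOrbits_swap_mul_swap_mul_lt hz hb fun h => hbz h.symm

theorem exists_ncard_lt (hσ : IsMaxGenusRotationSystem G σ) {a b z : G.Dart}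
    (hab : a.fst = b.fst) (haz : a.fst = z.fst) (hzb : z ≠ b)
    (hbz : (faceTracing G σ).SameCycle b z) (hb : ¬ (faceTracing G σ).SameCycle a b) :
    ∃ σ', IsMaxGenusRotationSystem G σ' ∧ {d | (faceTracing G σ).SameCycle a d}.ncard <
      {d | (faceTracing G σ').SameCycle a d}.ncard := by
  classical
  obtain ⟨y, o, hyo, hrot⟩ := hσ.1.exists_swap_mul_swap_mul hab haz hzb.symm
  have hz : ¬ (faceTracing G σ).SameCycle a z := fun h => hb (h.trans hbz.symm)
  obtain ⟨hay, hyo'⟩ :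
      ¬ (faceTracing G σ).SameCycle a y ∧ (faceTracing G σ).SameCycle y o := by
    rcases hyo with ⟨rfl, rfl⟩ | ⟨rfl, rfl⟩
    exacts [⟨hb, hbz⟩, ⟨hz, hbz.symm⟩]
  refine ⟨_, ⟨hrot, fun σ' hσ' => ?_⟩, ?_⟩ <;> rw [faceTracing_mul, mul_assoc]
  · exact (numOrbits_swap_mul_swap_mul_le hay hyo').trans (hσ.2 σ' hσ')
  · exact Set.ncard_lt_ncard (setOf_sameCycle_ssubset_swap_mul_swap_mul hay hyo')

theorem sameCycle_or_sameCycle_symm (hσ : IsMaxGenusRotationSystem G σ) {d₀ : G.Dart}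
    (hmax : ∀ σ' d, IsMaxGenusRotationSystem G σ' →
      {e | (faceTracing G σ').SameCycle d e}.ncard ≤
        {e | (faceTracing G σ).SameCycle d₀ e}.ncard)
    {a b : G.Dart} (hab : a.fst = b.fst) (ha : (faceTracing G σ).SameCycle d₀ a) :
    (faceTracing G σ).SameCycle d₀ b ∨ (faceTracing G σ).SameCycle d₀ b.symm := by
  set τ := faceTracing G σ
  by_contra! hb
  have hface : {e | τ.SameCycle a e} = {e | τ.SameCycle d₀ e} :=
    Set.ext fun e => ⟨ha.trans, ha.symm.trans⟩
  have hab' : ¬ τ.SameCycle a b := fun h => hb.1 (ha.trans h)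
  have hσb : a.fst = (σ b).fst := hab.trans (hσ.1.1 b).symm
  have hσb' : ¬ τ.SameCycle a (σ b) := fun h =>
    hb.2 (ha.trans (h.trans (sameCycle_faceTracing_symm_apply b).symm))
  have hσbb : σ b ≠ b := fun h => hab' (by rw [(hσ.1.2 b a hab.symm).eq_of_left h])
  obtain ⟨σ', hσ', hlt⟩ :=
    hσ.exists_ncard_lt hab hσb hσbb (hσ.sameCycle_of_fst_eq hab hσb hab' hσb') hab'
  rw [hface] at hlt
  exact (hmax σ' a hσ').not_gt hlt

end IsMaxGenusRotationSystem

end SimpleGraph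

/-- Every finite connected simple graph with at least one edge has a rotation system whose
face-tracing permutation has a single orbit containing a dart of every edge, and whose
number of orbits (faces) is minimum over all rotation systems; i.e. the graph has an
edge-outer orientable embedding of maximum orientable genus. -/
theorem edge_outer_embedding_max_genus {V : Type*} [Fintype V] (G : SimpleGraph V)
    (hconn : G.Connected) (hne : G.edgeSet.Nonempty) :
    ∃ σ : Equiv.Perm G.Dart, IsRotationSystem G σ ∧
      (∃ d₀ : G.Dart, ∀ e ∈ G.edgeSet, ∃ d : G.Dart,
        d.edge = e ∧ (faceTracing G σ).SameCycle d₀ d) ∧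
      (∀ σ' : Equiv.Perm G.Dart, IsRotationSystem G σ' →
        numOrbits (faceTracing G σ) ≤ numOrbits (faceTracing G σ')) := by
  obtain ⟨σ₀, hσ₀⟩ := exists_isRotationSystem G
  obtain ⟨σ₁, hσ₁, hmin⟩ := Set.exists_min_image {σ | IsRotationSystem G σ}
    (fun σ => numOrbits (faceTracing G σ)) (Set.toFinite _) ⟨σ₀, hσ₀⟩
  obtain ⟨v, w, hvw⟩ := ne_bot_iff_exists_adj.1 (edgeSet_nonempty.1 hne)
  obtain ⟨⟨σ, d₀⟩, hσ, hmax⟩ :=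
    Set.exists_max_image {p : Perm G.Dart × G.Dart | IsMaxGenusRotationSystem G p.1}
    (fun p => {d | (faceTracing G p.1).SameCycle p.2 d}.ncard) (Set.toFinite _)
    ⟨(σ₁, ⟨(v, w), hvw⟩), hσ₁, hmin⟩
  refine ⟨σ, hσ.1, ⟨d₀, forall_mem_edgeSet_exists_sameCycle hconn hσ.1
    fun a b hab ha =>
      hσ.sameCycle_or_sameCycle_symm (fun σ' d hσ' => hmax (σ', d) hσ') hab ha⟩, hσ.2⟩
end

section
/- Let G be a finite 3-regular simple graph. A closed walk W in G is a reporter strand walk (i.e., W uses every edge of G at least once and W is a facial walk of some rotation system on G) if and only if W uses every edge at least once, W uses each dart at most once (i.e., W is orientable: each edge is used at most once in each direction), and W is retraction-free (no dart of W is immediately followed, cyclically, by its reverse). -/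
/-!
Each time a closed walk passes through a vertex it makes a *turn* `(x, y)`: it arrives along
the reverse of the dart `x` and leaves along the dart `y`, and the walk is facial for `σ`
exactly when `σ x = y` at every turn. A rotation system fixes no dart at a vertex of degree
at least two, so a facial walk never turns back.

Conversely, for a dart-simple, retraction-free, edge-spanning closed walk, the turns at a
vertex form a fixed-point-free partial injection on its three darts which involves every dart.
Such a relation contains no 2-cycle (the third dart would have no partner), so it extends to
a 3-cycle; these 3-cycles glue to a rotation system for which the walk is facial.
-/

open SimpleGraph

/-- A closed walk `w` is a facial walk of the rotation system `σ`: its darts are pairwise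
distinct and the face-tracing permutation sends each dart of `w` to the (cyclically) next
dart of `w`. -/
def IsFacialWalk {V : Type*} {G : SimpleGraph V} (σ : Equiv.Perm G.Dart) {v : V}
    (w : G.Walk v v) : Prop :=
  w.darts.Nodup ∧
    ∀ i : Fin w.darts.length,
      faceTracing G σ (w.darts.get i) =
        w.darts.get ⟨((i : ℕ) + 1) % w.darts.length, Nat.mod_lt _ i.pos⟩

/-- A closed walk is retraction-free: no dart in its cyclic dart sequence is immediately
followed by its reverse. -/
def RetractionFree {V : Type*} {G : SimpleGraph V} {v : V} (w : G.Walk v v) : Prop :=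
  ∀ i : Fin w.darts.length,
    w.darts.get ⟨((i : ℕ) + 1) % w.darts.length, Nat.mod_lt _ i.pos⟩ ≠ (w.darts.get i).symm

/-- A walk uses every edge of the graph at least once. -/
def EdgeSpanning {V : Type*} {G : SimpleGraph V} {u v : V} (w : G.Walk u v) : Prop :=
  ∀ e ∈ G.edgeSet, e ∈ w.edges

open Equiv Equiv.Perm

theorem Fin.val_finRotate {n : ℕ} (i : Fin n) : (finRotate n i : ℕ) = (i + 1) % n := by
  obtain ⟨n, rfl⟩ := Nat.exists_eq_succ_of_ne_zero i.pos.ne'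
  rw [coe_finRotate]
  split_ifs with h
  · simp [h]
  · rw [Nat.mod_eq_of_lt]
    exact Nat.succ_lt_succ (Fin.val_lt_last h)

theorem finRotate_eq_mk {n : ℕ} (i : Fin n) :
    finRotate n i = ⟨(i + 1) % n, Nat.mod_lt _ i.pos⟩ :=
  Fin.ext (Fin.val_finRotate i)

theorem exists_third_of_card_eq_three {β : Type*} (hβ : Nat.card β = 3) {x y : β}
    (hxy : x ≠ y) : ∃ z, x ≠ z ∧ y ≠ z ∧ ∀ w, w = x ∨ w = y ∨ w = z := by
  classical
  have : Finite β := Nat.finite_of_card_ne_zero (by omega)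
  have : Fintype β := Fintype.ofFinite β
  obtain ⟨z, hz⟩ : ∃ z, ({x, y} : Finset β)ᶜ = {z} := Finset.card_eq_one.mp (by
    rw [Finset.card_compl, Finset.card_pair hxy, ← Nat.card_eq_fintype_card, hβ])
  simp only [Finset.ext_iff, Finset.mem_compl, Finset.mem_insert, Finset.mem_singleton,
    not_or] at hz
  obtain ⟨hzx, hzy⟩ := (hz z).mpr rfl
  exact ⟨z, Ne.symm hzx, Ne.symm hzy, fun w => by have := hz w; tauto⟩

theorem exists_sameCycle_extending_of_card_eq_three {β : Type*} (hβ : Nat.card β = 3)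
    {R : β → β → Prop} (hfun : ∀ {x y y'}, R x y → R x y' → y = y')
    (hinj : ∀ {x x' y}, R x y → R x' y → x = x') (hirr : ∀ x, ¬ R x x)
    (hcov : ∀ x, (∃ y, R x y) ∨ ∃ y, R y x) :
    ∃ c : Perm β, (∀ x y, c.SameCycle x y) ∧ ∀ x y, R x y → c x = y := by
  classical
  have : Nonempty β := Nat.card_pos_iff.mp (by omega) |>.1
  obtain ⟨x, y, hxy⟩ : ∃ x y, R x y := by
    rcases hcov (Classical.arbitrary β) with ⟨y, h⟩ | ⟨y, h⟩ <;> exact ⟨_, _, h⟩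
  have hne : x ≠ y := fun h => hirr x (h ▸ hxy)
  obtain ⟨z, hxz, hyz, hmem⟩ := exists_third_of_card_eq_three hβ hne
  set c := swap x z * swap x y
  have hcx : c x = y := by simp [c, swap_apply_of_ne_of_ne hne.symm hyz]
  have hcy : c y = z := by simp [c]
  have hcz : c z = x := by simp [c, swap_apply_of_ne_of_ne hxz.symm hyz.symm]
  have hcycle : ∀ p, c.SameCycle x p := fun p => by
    rcases hmem p with h | h | h <;> rw [h]
    · exact hcx ▸ (SameCycle.refl c x).apply_right
    · exact hcy ▸ hcx ▸ (SameCycle.refl c x).apply_right.apply_right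
  refine ⟨c, fun p q => (hcycle p).symm.trans (hcycle q), fun p q hpq => ?_⟩
  -- `R` contains the step `x ↦ y` of `c`, so it cannot contain any step of `c⁻¹`.
  rcases hmem p with hp | hp | hp <;> rcases hmem q with hq | hq | hq <;> rw [hp, hq] at hpq ⊢
  all_goals first
    | exact (hirr _ hpq).elim
    | assumption
    | skip
  · exact (hyz (hfun hxy hpq)).elim
  · exfalso
    rcases hcov z with ⟨w, hzw⟩ | ⟨w, hwz⟩
    · rcases hmem w with h | h | h <;> rw [h] at hzw
      exacts [hyz (hinj hpq hzw), hxz (hinj hxy hzw), hirr z hzw]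
    · rcases hmem w with h | h | h <;> rw [h] at hwz
      exacts [hyz (hfun hxy hwz), hxz (hfun hpq hwz), hirr z hwz]
  · exact (hxz (hinj hxy hpq)).elim

namespace SimpleGraph

variable {V : Type*} {G : SimpleGraph V}

def dartFstFiberEquiv (u : V) : {d : G.Dart // d.fst = u} ≃ G.neighborSet u where
  toFun := fun ⟨d, hd⟩ => ⟨d.snd, hd ▸ d.adj⟩
  invFun w := ⟨G.dartOfNeighborSet u w, rfl⟩
  left_inv := by rintro ⟨⟨⟨a, b⟩, h⟩, rfl⟩; rfl
  right_inv _ := rfl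

theorem card_dartFstFiber (u : V) :
    Nat.card {d : G.Dart // d.fst = u} = (G.neighborSet u).ncard :=
  (Nat.card_congr (dartFstFiberEquiv u)).trans (Nat.card_coe_set_eq _)

theorem IsRotationSystem.eq_of_apply_eq_self {σ : Perm G.Dart} (hσ : IsRotationSystem G σ)
    {d d' : G.Dart} (hd : σ d = d) (h : d'.fst = d.fst) : d' = d := by
  obtain ⟨k, hk⟩ := hσ.2 d d' h.symm
  rwa [zpow_apply_eq_self_of_apply_eq_self hd, eq_comm] at hk

theorem IsRotationSystem.apply_ne_self {σ : Perm G.Dart} (hσ : IsRotationSystem G σ)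
    (d : G.Dart) (hd : 1 < (G.neighborSet d.fst).ncard) : σ d ≠ d := by
  rw [← card_dartFstFiber] at hd
  have : Finite {e : G.Dart // e.fst = d.fst} := Nat.finite_of_card_ne_zero (by omega)
  have : Nontrivial {e : G.Dart // e.fst = d.fst} := Finite.one_lt_card_iff_nontrivial.mp hd
  obtain ⟨⟨e, he⟩, hne⟩ := exists_ne (⟨d, rfl⟩ : {e : G.Dart // e.fst = d.fst})
  exact fun hfix => hne (Subtype.ext (hσ.eq_of_apply_eq_self hfix he))

theorem exists_rotationSystem_extending (hcubic : ∀ v : V, (G.neighborSet v).ncard = 3)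
    {R : G.Dart → G.Dart → Prop} (hfun : ∀ {x y y'}, R x y → R x y' → y = y')
    (hinj : ∀ {x x' y}, R x y → R x' y → x = x') (hirr : ∀ x, ¬ R x x)
    (hfst : ∀ {x y}, R x y → y.fst = x.fst) (hcov : ∀ x, (∃ y, R x y) ∨ ∃ y, R y x) :
    ∃ σ : Perm G.Dart, IsRotationSystem G σ ∧ ∀ x y, R x y → σ x = y := by
  choose c hc_cycle hc_ext using fun u : V =>
    exists_sameCycle_extending_of_card_eq_three ((card_dartFstFiber u).trans (hcubic u))
      (R := fun x y => R x.1 y.1) (fun h h' => Subtype.ext (hfun h h'))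
      (fun h h' => Subtype.ext (hinj h h')) (fun x => hirr x.1) fun x => by
        rcases hcov x.1 with ⟨y, h⟩ | ⟨y, h⟩
        exacts [.inl ⟨⟨y, (hfst h).trans x.2⟩, h⟩, .inr ⟨⟨y, (hfst h).symm.trans x.2⟩, h⟩]
  let σ : Perm G.Dart :=
    (Equiv.sigmaFiberEquiv fun d : G.Dart => d.fst).permCongr (Perm.sigmaCongrRight c)
  have hσ : ∀ u d (hd : d.fst = u), σ d = (c u ⟨d, hd⟩).1 := by rintro u d rfl; rfl
  have hσfst : ∀ d, (σ d).fst = d.fst := fun d => (c d.fst ⟨d, rfl⟩).2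
  refine ⟨σ, ⟨hσfst, fun d d' h => ?_⟩, fun x y hxy => ?_⟩
  · have hrestrict : σ.subtypePerm (p := fun e => e.fst = d.fst) (fun e => by rw [hσfst]) =
        c d.fst :=
      Equiv.ext fun ⟨e, he⟩ => Subtype.ext (hσ _ e he)
    have := hc_cycle d.fst ⟨d, rfl⟩ ⟨d', h.symm⟩
    rw [← hrestrict] at this
    exact sameCycle_subtypePerm.mp this
  · rw [hσ _ x rfl, hc_ext x.fst ⟨x, rfl⟩ ⟨y, hfst hxy⟩ hxy]

end SimpleGraph

namespace SimpleGraph.Walk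

variable {V : Type*} {G : SimpleGraph V} {v : V} {w : G.Walk v v}

theorem retractionFree_iff :
    RetractionFree w ↔ ∀ i, w.darts.get (finRotate _ i) ≠ (w.darts.get i).symm := by
  simp only [RetractionFree, finRotate_eq_mk]

theorem fst_darts_get_finRotate (w : G.Walk v v) (i : Fin w.darts.length) :
    (w.darts.get (finRotate _ i)).fst = (w.darts.get i).snd := by
  simp only [List.get_eq_getElem, darts_getElem_eq_getVert, Fin.val_finRotate]
  obtain hlt | heq : (i : ℕ) + 1 < w.darts.length ∨ (i : ℕ) + 1 = w.darts.length := by omega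
  · rw [Nat.mod_eq_of_lt hlt]
  · rw [heq, Nat.mod_self, getVert_zero, length_darts, getVert_length]

def IsTurn (w : G.Walk v v) (x y : G.Dart) : Prop :=
  ∃ i : Fin w.darts.length, (w.darts.get i).symm = x ∧ w.darts.get (finRotate _ i) = y

theorem IsTurn.fst_eq {x y : G.Dart} : w.IsTurn x y → y.fst = x.fst := by
  rintro ⟨i, rfl, rfl⟩
  exact w.fst_darts_get_finRotate i

theorem IsTurn.right_unique (hw : w.darts.Nodup) {x y y' : G.Dart} :
    w.IsTurn x y → w.IsTurn x y' → y = y' := by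
  rintro ⟨i, hi, rfl⟩ ⟨j, hj, rfl⟩
  rw [hw.get_inj_iff.mp (Dart.symm_involutive.injective (hi.trans hj.symm))]

theorem IsTurn.left_unique (hw : w.darts.Nodup) {x x' y : G.Dart} :
    w.IsTurn x y → w.IsTurn x' y → x = x' := by
  rintro ⟨i, rfl, hi⟩ ⟨j, rfl, hj⟩
  rw [(finRotate _).injective (hw.get_inj_iff.mp (hi.trans hj.symm))]

theorem not_isTurn_self (hw : RetractionFree w) (x : G.Dart) : ¬ w.IsTurn x x := by
  rintro ⟨i, hi, hi'⟩
  exact retractionFree_iff.mp hw i (hi'.trans hi.symm)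

theorem exists_isTurn_or (hw : EdgeSpanning w) (x : G.Dart) :
    (∃ y, w.IsTurn x y) ∨ ∃ y, w.IsTurn y x := by
  obtain ⟨d, hd, hedge⟩ := List.mem_map.mp (hw x.edge x.edge_mem)
  obtain ⟨i, rfl⟩ := List.mem_iff_get.mp hd
  rcases (dart_edge_eq_iff _ _).mp hedge with h | h
  · exact .inr ⟨_, (finRotate _).symm i, rfl, by rw [Equiv.apply_symm_apply, h]⟩
  · exact .inl ⟨_, i, by rw [h, Dart.symm_symm], rfl⟩

theorem isFacialWalk_of_isTurn {σ : Equiv.Perm G.Dart} (hw : w.darts.Nodup)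
    (hσ : ∀ x y, w.IsTurn x y → σ x = y) : IsFacialWalk σ w :=
  ⟨hw, fun i => by rw [← finRotate_eq_mk]; exact hσ _ _ ⟨i, rfl, rfl⟩⟩

theorem retractionFree_of_isFacialWalk {σ : Equiv.Perm G.Dart} (hσ : IsRotationSystem G σ)
    (hG : ∀ u, 1 < (G.neighborSet u).ncard) (hw : IsFacialWalk σ w) : RetractionFree w := by
  refine retractionFree_iff.mpr fun i hi => hσ.apply_ne_self (w.darts.get i).symm (hG _) ?_
  have := hw.2 i
  rwa [← finRotate_eq_mk, hi] at this

end SimpleGraph.Walk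

theorem reporter_strand_iff_cubic_general {V : Type*}
    (G : SimpleGraph V) (hcubic : ∀ v : V, (G.neighborSet v).ncard = 3)
    (v : V) (W : G.Walk v v) :
    (EdgeSpanning W ∧ ∃ σ : Equiv.Perm G.Dart, IsRotationSystem G σ ∧ IsFacialWalk σ W) ↔
      (EdgeSpanning W ∧ W.darts.Nodup ∧ RetractionFree W) := by
  constructor
  · rintro ⟨hspan, σ, hσ, hfacial⟩
    exact ⟨hspan, hfacial.1, Walk.retractionFree_of_isFacialWalk hσ (by simp [hcubic]) hfacial⟩
  · rintro ⟨hspan, hnodup, hret⟩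
    obtain ⟨σ, hσ, hturn⟩ := exists_rotationSystem_extending hcubic (R := W.IsTurn)
      (Walk.IsTurn.right_unique hnodup) (Walk.IsTurn.left_unique hnodup)
      (Walk.not_isTurn_self hret) Walk.IsTurn.fst_eq (Walk.exists_isTurn_or hspan)
    exact ⟨hspan, σ, hσ, Walk.isFacialWalk_of_isTurn hnodup hturn⟩

/-- In a finite 3-regular simple graph, a closed walk is a reporter strand walk (an
edge-spanning facial walk of some rotation system) iff it is edge-spanning, uses each dart
at most once, and is retraction-free. -/
theorem reporter_strand_iff_cubic {V : Type*} [Fintype V]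
    (G : SimpleGraph V) (hcubic : ∀ v : V, (G.neighborSet v).ncard = 3)
    (v : V) (W : G.Walk v v) :
    (EdgeSpanning W ∧ ∃ σ : Equiv.Perm G.Dart, IsRotationSystem G σ ∧ IsFacialWalk σ W) ↔
      (EdgeSpanning W ∧ W.darts.Nodup ∧ RetractionFree W) :=
  reporter_strand_iff_cubic_general G hcubic v W
end

section
/- Let G be a finite 3-regular simple graph with an edge u1u2, and let H be a finite connected simple graph, vertex-disjoint from G, having exactly two vertices v1 ≠ v2 of degree 2 and all other vertices of degree 3 (an edge gadget). Let J be the graph on the disjoint union of V(G) and V(H) whose edges are those of G except u1u2, those of H, and the two new edges u1v1 and u2v2 (the bisection of u1u2 by H). Then J is 3-regular; moreover, if G is 2-connected and the cubic completion H⁺ (the graph H together with the additional edge v1v2) is 2-connected, then J is 2-connected. -/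
open SimpleGraph

/-- `G` is `k`-connected: it has more than `k` vertices and deleting any set of fewer than
`k` vertices leaves a connected graph. -/
def KConnected (k : ℕ) {V : Type*} (G : SimpleGraph V) : Prop :=
  k < Nat.card V ∧ ∀ s : Set V, s.ncard < k → (G.induce sᶜ).Connected

/-- The graph `J` obtained by bisecting the edge `u₁u₂` of `G` with the edge gadget `H`:
vertices are those of `G` together with those of `H`; edges are those of `G` except
`u₁u₂`, those of `H`, and the two new edges `u₁v₁` and `u₂v₂`. -/
def bisect {V V' : Type*} (G : SimpleGraph V) (H : SimpleGraph V')
    (u₁ u₂ : V) (v₁ v₂ : V') : SimpleGraph (V ⊕ V') :=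
  SimpleGraph.fromRel (fun x y =>
    (∃ a b : V, x = Sum.inl a ∧ y = Sum.inl b ∧ G.Adj a b ∧ s(a, b) ≠ s(u₁, u₂)) ∨
    (∃ a b : V', x = Sum.inr a ∧ y = Sum.inr b ∧ H.Adj a b) ∨
    (x = Sum.inl u₁ ∧ y = Sum.inr v₁) ∨ (x = Sum.inl u₂ ∧ y = Sum.inr v₂))

/-- The cubic completion `H⁺` of an edge gadget `H` with degree-2 vertices `v₁, v₂`:
`H` together with the additional edge `v₁v₂`. -/
def cubicCompletionEdge {V' : Type*} (H : SimpleGraph V') (v₁ v₂ : V') : SimpleGraph V' :=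
  SimpleGraph.fromEdgeSet (insert s(v₁, v₂) H.edgeSet)

/-! Bisecting changes degrees only at `u₁` and `u₂`, which trade each other for `v₁` and `v₂`,
and at `v₁` and `v₂`, which gain `u₁` and `u₂`; so `J` is cubic. For 2-connectivity delete one vertex `w`.
If `w` lies in `G`, the copy of `H` survives intact, and a walk in `G - w` lifts to `J - w` once
its one missing edge `u₁u₂` is replaced by the detour `u₁ v₁ ⋯ v₂ u₂` through `H`. If `w` lies
in `H`, the copy of `G - u₁u₂` survives intact (it is connected because `G - u₂` is and `u₂` has
a third neighbour), and a walk in `H⁺ - w` lifts once `v₁v₂` is replaced by a detour through `G`.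
-/

lemma Set.ncard_eq_iff_encard_eq {α : Type*} {s : Set α} {n : ℕ} (hn : n ≠ 0) :
    s.ncard = n ↔ s.encard = n := by
  refine ⟨fun h => ?_, fun h => by rw [Set.ncard_def, h, ENat.toNat_natCast]⟩
  rw [← (Set.finite_of_ncard_ne_zero (h ▸ hn)).cast_ncard_eq, h]

namespace SimpleGraph

variable {V : Type*} {G : SimpleGraph V}

lemma Reachable.map_of_forall_adj {α β : Type*} {A : SimpleGraph α} {B : SimpleGraph β}
    (f : α → β) (hf : ∀ x y, A.Adj x y → B.Reachable (f x) (f y)) {x y : α}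
    (h : A.Reachable x y) : B.Reachable (f x) (f y) := by
  rw [reachable_iff_reflTransGen] at h ⊢
  exact h.lift' f fun x y hxy => (reachable_iff_reflTransGen _ _).mp (hf x y hxy)

lemma connected_of_forall_connected_induce_compl_singleton
    (hcard : 2 < Nat.card V) (h : ∀ w, (G.induce {w}ᶜ).Connected) : G.Connected := by
  have : Finite V := Nat.finite_of_card_ne_zero (by omega)
  have hV : Nonempty V := Nat.card_pos_iff.mp (by omega) |>.1
  refine (connected_iff G).mpr ⟨fun x y => ?_, hV⟩
  obtain ⟨z, hz⟩ : ({x, y}ᶜ : Set V).Nonempty := by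
    rw [Set.nonempty_compl]
    intro hxy
    have := Set.ncard_insert_le x {y}
    rw [hxy, Set.ncard_univ, Set.ncard_singleton] at this
    omega
  simp only [Set.mem_compl_iff, Set.mem_insert_iff, Set.mem_singleton_iff, not_or] at hz
  exact ((h z).preconnected ⟨x, Ne.symm hz.1⟩ ⟨y, Ne.symm hz.2⟩).map (Embedding.induce _).toHom

lemma connected_deleteEdges_of_connected_induce_compl {u₁ u₂ z : V}
    (hG : (G.induce {u₂}ᶜ).Connected) (hz : G.Adj u₂ z) (hz₁ : z ≠ u₁) :
    (G.deleteEdges {s(u₁, u₂)}).Connected := by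
  let ι : G.induce {u₂}ᶜ →g G.deleteEdges {s(u₁, u₂)} :=
    ⟨Subtype.val, fun {x y} hxy => by
      have hx : (x : V) ≠ u₂ := x.2
      have hy : (y : V) ≠ u₂ := y.2
      simp [hx, hy, induce_adj.mp hxy]⟩
  refine (connected_iff_exists_forall_reachable _).mpr ⟨z, fun x => ?_⟩
  obtain rfl | hx := eq_or_ne x u₂
  · exact Adj.reachable (by simp [hz.symm, hz₁, hz.ne'])
  · exact (hG.preconnected ⟨z, hz.ne'⟩ ⟨x, hx⟩).map ι

end SimpleGraph

section KConnected

variable {V : Type*} {G : SimpleGraph V}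

lemma KConnected.finite {k : ℕ} (h : KConnected k G) : Finite V :=
  Nat.finite_of_card_ne_zero (Nat.zero_lt_of_lt h.1).ne'

lemma kConnected_two_of_forall_connected_induce_compl_singleton
    (hcard : 2 < Nat.card V) (h : ∀ w, (G.induce {w}ᶜ).Connected) : KConnected 2 G := by
  refine ⟨hcard, fun s hs => ?_⟩
  have : Finite V := Nat.finite_of_card_ne_zero (by omega)
  have hs : s.Subsingleton := Set.ncard_le_one_iff_subsingleton.mp (by omega)
  obtain rfl | ⟨w, rfl⟩ := hs.eq_empty_or_singleton
  · rw [Set.compl_empty, (induceUnivIso G).connected_iff]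
    exact connected_of_forall_connected_induce_compl_singleton hcard h
  · exact h w

end KConnected

section Bisect

variable {V V' : Type*} {G : SimpleGraph V} {H : SimpleGraph V'} {u₁ u₂ : V} {v₁ v₂ : V'}

@[simp]
lemma bisect_adj_inl_inl {a b : V} :
    (bisect G H u₁ u₂ v₁ v₂).Adj (.inl a) (.inl b) ↔ G.Adj a b ∧ s(a, b) ≠ s(u₁, u₂) := by
  simp [bisect, G.adj_comm b a]
  grind [G.ne_of_adj]

@[simp]
lemma bisect_adj_inr_inr {a b : V'} :
    (bisect G H u₁ u₂ v₁ v₂).Adj (.inr a) (.inr b) ↔ H.Adj a b := by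
  simp [bisect, H.adj_comm b a]
  exact fun h => h.ne

@[simp]
lemma bisect_adj_inl_inr {a : V} {b : V'} :
    (bisect G H u₁ u₂ v₁ v₂).Adj (.inl a) (.inr b) ↔ a = u₁ ∧ b = v₁ ∨ a = u₂ ∧ b = v₂ := by
  simp [bisect]

@[simp]
lemma bisect_adj_inr_inl {a : V} {b : V'} :
    (bisect G H u₁ u₂ v₁ v₂).Adj (.inr b) (.inl a) ↔ a = u₁ ∧ b = v₁ ∨ a = u₂ ∧ b = v₂ := by
  rw [adj_comm, bisect_adj_inl_inr]

lemma bisect_swap : bisect G H u₂ u₁ v₂ v₁ = bisect G H u₁ u₂ v₁ v₂ := by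
  ext (a | b) (a' | b') <;> simp [Sym2.eq_swap] <;> tauto

lemma neighborSet_bisect_inl_of_ne {a : V} (h₁ : a ≠ u₁) (h₂ : a ≠ u₂) :
    (bisect G H u₁ u₂ v₁ v₂).neighborSet (.inl a) = .inl '' G.neighborSet a := by
  ext (c | c) <;> simp [h₁, h₂]

lemma neighborSet_bisect_inl_left (hu : u₁ ≠ u₂) :
    (bisect G H u₁ u₂ v₁ v₂).neighborSet (.inl u₁) =
      insert (.inr v₁) (.inl '' (G.neighborSet u₁ \ {u₂})) := by
  ext (c | c) <;> simp [hu]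

lemma neighborSet_bisect_inr_of_ne {b : V'} (h₁ : b ≠ v₁) (h₂ : b ≠ v₂) :
    (bisect G H u₁ u₂ v₁ v₂).neighborSet (.inr b) = .inr '' H.neighborSet b := by
  ext (c | c) <;> simp [h₁, h₂]

lemma neighborSet_bisect_inr_left (hv : v₁ ≠ v₂) :
    (bisect G H u₁ u₂ v₁ v₂).neighborSet (.inr v₁) =
      insert (.inl u₁) (.inr '' H.neighborSet v₁) := by
  ext (c | c) <;> simp [hv]

lemma encard_neighborSet_bisect_inl_left (hu : G.Adj u₁ u₂) :
    ((bisect G H u₁ u₂ v₁ v₂).neighborSet (.inl u₁)).encard = (G.neighborSet u₁).encard := by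
  rw [neighborSet_bisect_inl_left hu.ne, Set.encard_insert_of_notMem (by simp),
    Sum.inl_injective.encard_image,
    Set.encard_sdiff_singleton_add_one (show u₂ ∈ G.neighborSet u₁ from hu)]

lemma encard_neighborSet_bisect_inl (hu : G.Adj u₁ u₂) (a : V) :
    ((bisect G H u₁ u₂ v₁ v₂).neighborSet (.inl a)).encard = (G.neighborSet a).encard := by
  obtain rfl | h₁ := eq_or_ne a u₁
  · exact encard_neighborSet_bisect_inl_left hu
  obtain rfl | h₂ := eq_or_ne a u₂
  · rw [← bisect_swap]
    exact encard_neighborSet_bisect_inl_left hu.symm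
  rw [neighborSet_bisect_inl_of_ne h₁ h₂, Sum.inl_injective.encard_image]

lemma encard_neighborSet_bisect_inr_left (hv : v₁ ≠ v₂) :
    ((bisect G H u₁ u₂ v₁ v₂).neighborSet (.inr v₁)).encard = (H.neighborSet v₁).encard + 1 := by
  rw [neighborSet_bisect_inr_left hv, Set.encard_insert_of_notMem (by simp),
    Sum.inr_injective.encard_image]

lemma encard_neighborSet_bisect_inr [DecidableEq V'] (hv : v₁ ≠ v₂) (b : V') :
    ((bisect G H u₁ u₂ v₁ v₂).neighborSet (.inr b)).encard =
      (H.neighborSet b).encard + if b = v₁ ∨ b = v₂ then 1 else 0 := by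
  obtain rfl | h₁ := eq_or_ne b v₁
  · simpa using encard_neighborSet_bisect_inr_left hv
  obtain rfl | h₂ := eq_or_ne b v₂
  · rw [← bisect_swap]
    simpa using encard_neighborSet_bisect_inr_left hv.symm
  rw [neighborSet_bisect_inr_of_ne h₁ h₂, Sum.inr_injective.encard_image]
  simp [h₁, h₂]

lemma connected_induce_compl_inl_bisect {a : V} (hu : u₁ ≠ u₂)
    (hG : (G.induce {a}ᶜ).Connected) (hH : H.Connected) :
    ((bisect G H u₁ u₂ v₁ v₂).induce {.inl a}ᶜ).Connected := by
  set J := (bisect G H u₁ u₂ v₁ v₂).induce {.inl a}ᶜ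
  let left : ({a}ᶜ : Set V) → ({.inl a}ᶜ : Set (V ⊕ V')) :=
    fun c => ⟨.inl c, by simpa using c.2.out⟩
  let right : H →g J := ⟨fun b => ⟨.inr b, by simp⟩, fun h => by simpa [J] using h⟩
  have hright (b : V') : J.Reachable (right v₁) (right b) := (hH.preconnected v₁ b).map right
  have hterminal (c : ({a}ᶜ : Set V)) (hc : (c : V) = u₁ ∨ (c : V) = u₂) :
      J.Reachable (right v₁) (left c) := by
    obtain hc | hc := hc
    · exact Adj.reachable (by simp [J, left, right, hc])
    · exact (hright v₂).trans (Adj.reachable (by simp [J, left, right, hc]))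
  have hleft : ∀ c d, (G.induce {a}ᶜ).Adj c d → J.Reachable (left c) (left d) := by
    intro c d hcd
    by_cases he : s((c : V), d) = s(u₁, u₂)
    · rw [Sym2.eq_iff] at he
      obtain ⟨hc, hd⟩ | ⟨hc, hd⟩ := he
      · exact (hterminal c (.inl hc)).symm.trans (hterminal d (.inr hd))
      · exact (hterminal c (.inr hc)).symm.trans (hterminal d (.inl hd))
    · exact Adj.reachable ((bisect_adj_inl_inl (u₁ := u₁)).mpr ⟨induce_adj.mp hcd, he⟩)
  obtain ⟨t, ht⟩ : ∃ t : ({a}ᶜ : Set V), (t : V) = u₁ ∨ (t : V) = u₂ := by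
    obtain rfl | h₁ := eq_or_ne a u₁
    · exact ⟨⟨u₂, hu.symm⟩, .inr rfl⟩
    · exact ⟨⟨u₁, h₁.symm⟩, .inl rfl⟩
  refine (connected_iff_exists_forall_reachable _).mpr ⟨right v₁, ?_⟩
  rintro ⟨c | b, hx⟩
  · exact (hterminal t ht).trans
      ((hG.preconnected t ⟨c, by simpa using hx⟩).map_of_forall_adj left hleft)
  · exact hright b

lemma connected_induce_compl_inr_bisect {b : V'} (hv : v₁ ≠ v₂)
    (hH : ((cubicCompletionEdge H v₁ v₂).induce {b}ᶜ).Connected)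
    (hG : (G.deleteEdges {s(u₁, u₂)}).Connected) :
    ((bisect G H u₁ u₂ v₁ v₂).induce {.inr b}ᶜ).Connected := by
  set J := (bisect G H u₁ u₂ v₁ v₂).induce {.inr b}ᶜ
  let left : G.deleteEdges {s(u₁, u₂)} →g J :=
    ⟨fun a => ⟨.inl a, by simp⟩, fun h => by simpa [J] using h⟩
  let right : ({b}ᶜ : Set V') → ({.inr b}ᶜ : Set (V ⊕ V')) :=
    fun c => ⟨.inr c, by simpa using c.2.out⟩
  have hleft (a : V) : J.Reachable (left u₁) (left a) := (hG.preconnected u₁ a).map left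
  have hterminal (c : ({b}ᶜ : Set V')) (hc : (c : V') = v₁ ∨ (c : V') = v₂) :
      J.Reachable (left u₁) (right c) := by
    obtain hc | hc := hc
    · exact Adj.reachable (by simp [J, left, right, hc])
    · exact (hleft u₂).trans (Adj.reachable (by simp [J, left, right, hc]))
  have hright : ∀ c d, ((cubicCompletionEdge H v₁ v₂).induce {b}ᶜ).Adj c d →
      J.Reachable (right c) (right d) := by
    intro c d hcd
    obtain ⟨he | hcd, -⟩ := (fromEdgeSet_adj _).mp (induce_adj.mp hcd)
    · rw [Sym2.eq_iff] at he
      obtain ⟨hc, hd⟩ | ⟨hc, hd⟩ := he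
      · exact (hterminal c (.inl hc)).symm.trans (hterminal d (.inr hd))
      · exact (hterminal c (.inr hc)).symm.trans (hterminal d (.inl hd))
    · exact Adj.reachable ((bisect_adj_inr_inr (u₁ := u₁)).mpr hcd)
  obtain ⟨t, ht⟩ : ∃ t : ({b}ᶜ : Set V'), (t : V') = v₁ ∨ (t : V') = v₂ := by
    obtain rfl | h₁ := eq_or_ne b v₁
    · exact ⟨⟨v₂, hv.symm⟩, .inr rfl⟩
    · exact ⟨⟨v₁, h₁.symm⟩, .inl rfl⟩
  refine (connected_iff_exists_forall_reachable _).mpr ⟨left u₁, ?_⟩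
  rintro ⟨a | c, hx⟩
  · exact hleft a
  · exact (hterminal t ht).trans
      ((hH.preconnected t ⟨c, by simpa using hx⟩).map_of_forall_adj right hright)

end Bisect

theorem bisect_cubic_and_two_connected_general {V V' : Type*} [DecidableEq V']
    (G : SimpleGraph V) (H : SimpleGraph V') (u₁ u₂ : V) (v₁ v₂ : V')
    (hG3 : ∀ v : V, (G.neighborSet v).ncard = 3)
    (hu : G.Adj u₁ u₂)
    (hHconn : H.Connected) (hv : v₁ ≠ v₂)
    (hHdeg : ∀ x : V', (H.neighborSet x).ncard = if x = v₁ ∨ x = v₂ then 2 else 3) :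
    (∀ x : V ⊕ V', ((bisect G H u₁ u₂ v₁ v₂).neighborSet x).ncard = 3) ∧
    (KConnected 2 G → KConnected 2 (cubicCompletionEdge H v₁ v₂) →
      KConnected 2 (bisect G H u₁ u₂ v₁ v₂)) := by
  refine ⟨fun x => ?_, fun hKG hKH => ?_⟩
  · rw [Set.ncard_eq_iff_encard_eq three_ne_zero]
    obtain a | b := x
    · rw [encard_neighborSet_bisect_inl hu, ← Set.ncard_eq_iff_encard_eq three_ne_zero, hG3]
    · have hb := hHdeg b
      rw [encard_neighborSet_bisect_inr hv]
      split_ifs at hb ⊢ <;> rw [(Set.ncard_eq_iff_encard_eq (by simp)).mp hb] <;> rfl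
  have := hKG.finite
  have := hKH.finite
  obtain ⟨z, hz, hz₁⟩ := (G.neighborSet u₂).exists_ne_of_one_lt_ncard (by rw [hG3]; norm_num) u₁
  refine kConnected_two_of_forall_connected_induce_compl_singleton ?_ ?_
  · exact hKG.1.trans_le (Nat.card_sum (α := V) (β := V') ▸ Nat.le_add_right _ _)
  rintro (a | b)
  · exact connected_induce_compl_inl_bisect hu.ne (hKG.2 {a} (by simp)) hHconn
  · exact connected_induce_compl_inr_bisect hv (hKH.2 {b} (by simp))
      (connected_deleteEdges_of_connected_induce_compl (hKG.2 {u₂} (by simp)) hz hz₁)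

/-- Bisecting an edge `u₁u₂` of a finite 3-regular simple graph `G` with an edge gadget `H`
(a finite connected simple graph with exactly two vertices `v₁ ≠ v₂` of degree 2, assumed
nonadjacent, and all other vertices of degree 3) produces a 3-regular graph `J`; moreover, if
`G` and the cubic completion `H⁺` are 2-connected then so is `J`. -/
theorem bisect_cubic_and_two_connected {V V' : Type*} [Fintype V] [Fintype V']
    [DecidableEq V] [DecidableEq V']
    (G : SimpleGraph V) (H : SimpleGraph V') (u₁ u₂ : V) (v₁ v₂ : V')
    (hG3 : ∀ v : V, (G.neighborSet v).ncard = 3)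
    (hu : G.Adj u₁ u₂)
    (hHconn : H.Connected) (hv : v₁ ≠ v₂) (hvadj : ¬ H.Adj v₁ v₂)
    (hHdeg : ∀ x : V', (H.neighborSet x).ncard = if x = v₁ ∨ x = v₂ then 2 else 3) :
    (∀ x : V ⊕ V', ((bisect G H u₁ u₂ v₁ v₂).neighborSet x).ncard = 3) ∧
    (KConnected 2 G → KConnected 2 (cubicCompletionEdge H v₁ v₂) →
      KConnected 2 (bisect G H u₁ u₂ v₁ v₂)) :=
  bisect_cubic_and_two_connected_general G H u₁ u₂ v₁ v₂ hG3 hu hHconn hv hHdeg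
end

section
/- Let G be a finite 3-regular simple graph, let u be a vertex of G with neighbors u1, u2, u3, and let H be a finite connected simple graph, vertex-disjoint from G, having exactly three vertices v1, v2, v3 of degree 2 and all other vertices of degree 3 (a vertex gadget). Let J be the graph on the disjoint union of V(G)∖{u} and V(H) whose edges are those of G not incident with u, those of H, and the three new edges u1v1, u2v2, u3v3 (the replacement of u by H). Then J is 3-regular; moreover, if G is 3-connected and the cubic completion H⁺ (the graph H together with a new vertex v adjacent to v1, v2 and v3) is 3-connected, then J is 3-connected. -/
open SimpleGraph

/-- The graph `J` obtained by replacing the vertex `u` of `G` (with neighbors `u₁, u₂, u₃`)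
by the vertex gadget `H` (with degree-2 vertices `v₁, v₂, v₃`): vertices are those of `G`
other than `u` together with those of `H`; edges are those of `G` not incident with `u`,
those of `H`, and the three new edges `u₁v₁`, `u₂v₂`, `u₃v₃`. -/
def replaceVertex' {V V' : Type*} (G : SimpleGraph V) (H : SimpleGraph V')
    (u u₁ u₂ u₃ : V) (v₁ v₂ v₃ : V') : SimpleGraph ({x : V // x ≠ u} ⊕ V') :=
  SimpleGraph.fromRel (fun x y =>
    (∃ a b : {x : V // x ≠ u}, x = Sum.inl a ∧ y = Sum.inl b ∧ G.Adj a b) ∨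
    (∃ a b : V', x = Sum.inr a ∧ y = Sum.inr b ∧ H.Adj a b) ∨
    (∃ a : {x : V // x ≠ u}, (a : V) = u₁ ∧ x = Sum.inl a ∧ y = Sum.inr v₁) ∨
    (∃ a : {x : V // x ≠ u}, (a : V) = u₂ ∧ x = Sum.inl a ∧ y = Sum.inr v₂) ∨
    (∃ a : {x : V // x ≠ u}, (a : V) = u₃ ∧ x = Sum.inl a ∧ y = Sum.inr v₃))

/-- The cubic completion `H⁺` of a vertex gadget `H` with degree-2 vertices `v₁, v₂, v₃`:
`H` together with a new vertex adjacent to `v₁`, `v₂` and `v₃`. -/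
def cubicCompletionVertex {V' : Type*} (H : SimpleGraph V') (v₁ v₂ v₃ : V') :
    SimpleGraph (Option V') :=
  SimpleGraph.fromRel (fun x y =>
    (∃ a b : V', x = some a ∧ y = some b ∧ H.Adj a b) ∨
    (x = none ∧ (y = some v₁ ∨ y = some v₂ ∨ y = some v₃)))

/-!
A set `s` of at most two vertices of `J` meets the two sides `G - u` and `H = H⁺ - v` in at
most two vertices altogether; both sides are treated alike, as a 3-connected graph minus one
vertex. A side that loses at most one vertex stays connected, since together with `u`
(resp. `v`) at most two vertices of a 3-connected graph are gone. The three edges `uᵢvᵢ` are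
disjoint, so one of them survives and joins the sides. If instead one side loses two
vertices, the other side is untouched, and every surviving vertex `x` of the damaged side
still reaches some edge `uᵢvᵢ`: the 3-connected graph minus those two vertices contains a
path from `x` to `u` (resp. `v`), and its last vertex before `u` is some `uᵢ` (resp. `vᵢ`).

For the degrees, each `uᵢ` and `vᵢ` trades its edge to `u` (resp. `v`) for the edge `uᵢvᵢ`.
-/

open Function Set

theorem Set.ncard_preimage_add_ncard_preimage {α β γ : Type*} [Finite γ] {f : α → γ}
    {g : β → γ} (hf : Injective f) (hg : Injective g) (hfg : Disjoint (range f) (range g))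
    (s : Set γ) : (f ⁻¹' s).ncard + (g ⁻¹' s).ncard = (s ∩ (range f ∪ range g)).ncard := by
  rw [inter_union_distrib_left, ncard_union_eq (hfg.mono inter_subset_right inter_subset_right),
    ← image_preimage_eq_inter_range, ← image_preimage_eq_inter_range,
    ncard_image_of_injective _ hf, ncard_image_of_injective _ hg]

theorem Set.ncard_preimage_inl_add_ncard_preimage_inr {α β : Type*} [Finite α] [Finite β]
    (s : Set (α ⊕ β)) : (Sum.inl ⁻¹' s).ncard + (Sum.inr ⁻¹' s).ncard = s.ncard := by
  rw [ncard_preimage_add_ncard_preimage Sum.inl_injective Sum.inr_injective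
    isCompl_range_inl_range_inr.disjoint, range_inl_union_range_inr, inter_univ]

theorem exists_notMem_and_notMem_of_ncard_lt {ι X : Type*} [Finite ι] {e₁ e₂ : ι → X}
    (he₁ : Injective e₁) (he₂ : Injective e₂) (he : Disjoint (range e₁) (range e₂))
    {s : Set X} (hs : s.Finite) (hcard : s.ncard < Nat.card ι) :
    ∃ i, e₁ i ∉ s ∧ e₂ i ∉ s := by
  by_contra! hmem
  classical
  let c : ι → s := fun i => if h : e₁ i ∈ s then ⟨e₁ i, h⟩ else ⟨e₂ i, hmem i h⟩
  have hc : Injective c := by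
    intro i j hij
    simp only [c] at hij
    split_ifs at hij <;> simp only [Subtype.mk.injEq] at hij
    · exact he₁ hij
    · exact absurd hij (he.ne_of_mem ⟨i, rfl⟩ ⟨j, rfl⟩)
    · exact absurd hij.symm (he.ne_of_mem ⟨j, rfl⟩ ⟨i, rfl⟩)
    · exact he₂ hij
  have := hs.to_subtype
  have := Nat.card_le_card_of_injective c hc
  rw [Nat.card_coe_set_eq] at this
  omega

namespace SimpleGraph

variable {W X : Type*} {K : SimpleGraph W} {L : SimpleGraph X}

theorem ne_of_neighborSet_eq_insert {u u₁ u₂ u₃ : W} (hu : K.neighborSet u = {u₁, u₂, u₃}) :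
    u₁ ≠ u ∧ u₂ ≠ u ∧ u₃ ≠ u := by
  have h : ∀ w ∈ ({u₁, u₂, u₃} : Set W), w ≠ u := fun w hw =>
    (K.ne_of_adj (show w ∈ K.neighborSet u from hu ▸ hw)).symm
  exact ⟨h _ (by simp), h _ (by simp), h _ (by simp)⟩

theorem three_lt_card_of_ncard_neighborSet_eq [Finite W] {w : W}
    (hw : (K.neighborSet w).ncard = 3) : 3 < Nat.card W := by
  have := ncard_insert_of_notMem (K.notMem_neighborSet_self (a := w))
  have := ncard_le_card (insert w (K.neighborSet w))
  omega

theorem exists_adj_reachable_induce_compl_insert {t : Set W} {x₀ : W} (hx₀ : x₀ ∉ t)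
    (hK : (K.induce tᶜ).Connected) {a : W} (ha : a ∉ insert x₀ t) :
    ∃ w, K.Adj w x₀ ∧ ∃ hw : w ∉ insert x₀ t,
      (K.induce (insert x₀ t)ᶜ).Reachable ⟨a, ha⟩ ⟨w, hw⟩ := by
  suffices ∀ (b c : (tᶜ : Set W)) (_ : (K.induce tᶜ).Walk b c) (hb : (b : W) ∉ insert x₀ t),
      (c : W) = x₀ → ∃ w, K.Adj w x₀ ∧ ∃ hw : w ∉ insert x₀ t,
        (K.induce (insert x₀ t)ᶜ).Reachable ⟨b, hb⟩ ⟨w, hw⟩ from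
    this ⟨a, fun h => ha (.inr h)⟩ ⟨x₀, hx₀⟩ (hK.preconnected _ _).some ha rfl
  intro b c p
  induction p with
  | nil => exact fun hb hc => absurd (.inl hc) hb
  | @cons b d c hbd _ ih =>
    intro hb hc
    by_cases hd : (d : W) = x₀
    · exact ⟨b, hd ▸ hbd, hb, .refl _⟩
    · have hd' : (d : W) ∉ insert x₀ t := by rintro (h | h); exacts [hd h, d.2 h]
      obtain ⟨w, hw, hwt, hreach⟩ := ih hd' hc
      exact ⟨w, hw, hwt,
        (show (K.induce (insert x₀ t)ᶜ).Adj ⟨_, hb⟩ ⟨_, hd'⟩ from hbd).reachable.trans hreach⟩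

def Hom.inducePunctured {x₀ : W} (f : K.induce {x₀}ᶜ →g L) (s : Set X) :
    K.induce (insert x₀ (Subtype.val '' (f ⁻¹' s)))ᶜ →g L.induce sᶜ where
  toFun x := ⟨f ⟨x, fun h => x.2 (.inl h)⟩, fun h => x.2 (.inr ⟨_, h, rfl⟩)⟩
  map_rel' h := f.map_rel h

theorem Hom.val_notMem_insert_image_preimage {x₀ : W} (f : K.induce {x₀}ᶜ →g L) {s : Set X}
    {a : ({x₀}ᶜ : Set W)} (ha : f a ∉ s) : (a : W) ∉ insert x₀ (Subtype.val '' (f ⁻¹' s)) := by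
  rintro (h | ⟨b, hb, h⟩)
  exacts [a.2 h, ha (Subtype.ext h ▸ hb)]

end SimpleGraph

open SimpleGraph

section KConnected

variable {W X : Type*} {K : SimpleGraph W} {L : SimpleGraph X}

theorem KConnected.finite_s8 {k : ℕ} (hK : KConnected k K) : Finite W :=
  Nat.finite_of_card_ne_zero (by have := hK.1; omega)

theorem KConnected.reachable_of_ncard_le_one (hK : KConnected 3 K) {x₀ : W}
    (f : K.induce {x₀}ᶜ →g L) {s : Set X} (hs : (f ⁻¹' s).ncard ≤ 1)
    {a b : ({x₀}ᶜ : Set W)} (ha : f a ∉ s) (hb : f b ∉ s) :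
    (L.induce sᶜ).Reachable ⟨f a, ha⟩ ⟨f b, hb⟩ := by
  have hconn := hK.2 (insert x₀ (Subtype.val '' (f ⁻¹' s))) <| by
    have := ncard_insert_le x₀ (Subtype.val '' (f ⁻¹' s))
    rw [ncard_image_of_injective _ Subtype.val_injective] at this
    omega
  exact (hconn.preconnected ⟨a, f.val_notMem_insert_image_preimage ha⟩
    ⟨b, f.val_notMem_insert_image_preimage hb⟩).map (f.inducePunctured s)

theorem KConnected.exists_adj_reachable (hK : KConnected 3 K) {x₀ : W}
    (f : K.induce {x₀}ᶜ →g L) {s : Set X} (hs : (f ⁻¹' s).ncard ≤ 2)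
    {a : ({x₀}ᶜ : Set W)} (ha : f a ∉ s) :
    ∃ w : ({x₀}ᶜ : Set W), K.Adj w x₀ ∧ ∃ hw : f w ∉ s,
      (L.induce sᶜ).Reachable ⟨f a, ha⟩ ⟨f w, hw⟩ := by
  have hconn := hK.2 (Subtype.val '' (f ⁻¹' s)) <| by
    rw [ncard_image_of_injective _ Subtype.val_injective]
    omega
  obtain ⟨w, hw, hwt, hreach⟩ := exists_adj_reachable_induce_compl_insert
    (show x₀ ∉ Subtype.val '' (f ⁻¹' s) from fun ⟨b, _, h⟩ => b.2 h) hconn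
    (f.val_notMem_insert_image_preimage ha)
  exact ⟨⟨w, fun h => hwt (.inl h)⟩, hw, fun h => hwt (.inr ⟨_, h, rfl⟩),
    hreach.map (f.inducePunctured s)⟩

/-- Every vertex of `L - s` reaches `f' b₀`; one on the side of `f` does so through the edge
`f a₀ f' b₀`, or, if `s` removes two vertices of that side, through an edge `hcross` at a
neighbour of `x₀`. -/
theorem KConnected.connected_induce_compl_of_glue {W' : Type*} {K' : SimpleGraph W'}
    (hK : KConnected 3 K) (hK' : KConnected 3 K') {x₀ : W} {x₀' : W'}
    (f : K.induce {x₀}ᶜ →g L) (f' : K'.induce {x₀'}ᶜ →g L)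
    (hcover : ∀ x, x ∈ range f ∨ x ∈ range f')
    (hcross : ∀ a : ({x₀}ᶜ : Set W), K.Adj a x₀ → ∃ b, L.Adj (f a) (f' b))
    {s : Set X} (hs : (f ⁻¹' s).ncard + (f' ⁻¹' s).ncard ≤ 2) (hs' : (f' ⁻¹' s).ncard ≤ 1)
    {a₀ b₀} (ha₀ : f a₀ ∉ s) (hb₀ : f' b₀ ∉ s) (hab₀ : L.Adj (f a₀) (f' b₀)) :
    (L.induce sᶜ).Connected := by
  have := hK'.finite_s8
  refine (connected_iff_exists_forall_reachable _).2 ⟨⟨f' b₀, hb₀⟩, ?_⟩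
  rintro ⟨x, hx⟩
  obtain ⟨a, rfl⟩ | ⟨b, rfl⟩ := hcover x
  · by_cases h₁ : (f ⁻¹' s).ncard ≤ 1
    · exact (show (L.induce sᶜ).Adj ⟨_, hb₀⟩ ⟨_, ha₀⟩ from hab₀.symm).reachable.trans
        (hK.reachable_of_ncard_le_one f h₁ ha₀ hx)
    · have hs'0 : f' ⁻¹' s = ∅ := (ncard_eq_zero (toFinite _)).1 (by omega)
      obtain ⟨w, hw, hws, hreach⟩ := hK.exists_adj_reachable f (by omega) hx
      obtain ⟨b, hwb⟩ := hcross w hw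
      have hb : f' b ∉ s := eq_empty_iff_forall_notMem.1 hs'0 b
      exact (hK'.reachable_of_ncard_le_one f' hs' hb₀ hb).trans
        ((show (L.induce sᶜ).Adj ⟨_, hb⟩ ⟨_, hws⟩ from hwb.symm).reachable.trans hreach.symm)
  · exact hK'.reachable_of_ncard_le_one f' hs' hb₀ hx

end KConnected

section ReplaceVertex

variable {V V' : Type*} {G : SimpleGraph V} {H : SimpleGraph V'} {u u₁ u₂ u₃ : V}
  {v₁ v₂ v₃ : V'}

theorem replaceVertex'_adj_inl_inl {a b : {x : V // x ≠ u}} :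
    (replaceVertex' G H u u₁ u₂ u₃ v₁ v₂ v₃).Adj (.inl a) (.inl b) ↔ G.Adj a b := by
  simp only [replaceVertex', fromRel_adj]
  grind [Adj.symm, Adj.ne]

theorem replaceVertex'_adj_inr_inr {a b : V'} :
    (replaceVertex' G H u u₁ u₂ u₃ v₁ v₂ v₃).Adj (.inr a) (.inr b) ↔ H.Adj a b := by
  simp only [replaceVertex', fromRel_adj]
  grind [Adj.symm, Adj.ne]

theorem replaceVertex'_adj_inl_inr {a : {x : V // x ≠ u}} {b : V'} :
    (replaceVertex' G H u u₁ u₂ u₃ v₁ v₂ v₃).Adj (.inl a) (.inr b) ↔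
      (a : V) = u₁ ∧ b = v₁ ∨ (a : V) = u₂ ∧ b = v₂ ∨ (a : V) = u₃ ∧ b = v₃ := by
  simp only [replaceVertex', fromRel_adj]
  aesop

theorem cubicCompletionVertex_adj_some_some {a b : V'} :
    (cubicCompletionVertex H v₁ v₂ v₃).Adj (some a) (some b) ↔ H.Adj a b := by
  simp only [cubicCompletionVertex, fromRel_adj]
  grind [Adj.symm, Adj.ne]

theorem cubicCompletionVertex_adj_some_none {a : V'} :
    (cubicCompletionVertex H v₁ v₂ v₃).Adj (some a) none ↔ a = v₁ ∨ a = v₂ ∨ a = v₃ := by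
  simp [cubicCompletionVertex]

variable (G H u u₁ u₂ u₃ v₁ v₂ v₃)

def replaceVertex'.inlHom : G.induce {u}ᶜ →g replaceVertex' G H u u₁ u₂ u₃ v₁ v₂ v₃ where
  toFun x := .inl ⟨x, x.2⟩
  map_rel' h := replaceVertex'_adj_inl_inl.2 h

def replaceVertex'.inrHom : (cubicCompletionVertex H v₁ v₂ v₃).induce {none}ᶜ →g
    replaceVertex' G H u u₁ u₂ u₃ v₁ v₂ v₃ where
  toFun y := .inr (y.1.get (Option.ne_none_iff_isSome.1 y.2))
  map_rel' := by
    rintro ⟨_ | a, ha⟩ ⟨_ | b, hb⟩ h <;> first | exact absurd rfl ha | exact absurd rfl hb |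
      exact replaceVertex'_adj_inr_inr.2 (cubicCompletionVertex_adj_some_some.1 h)

variable {G H u u₁ u₂ u₃ v₁ v₂ v₃}

namespace replaceVertex'

theorem inlHom_injective : Injective (inlHom G H u u₁ u₂ u₃ v₁ v₂ v₃) :=
  fun _ _ h => Subtype.ext (congrArg Subtype.val (Sum.inl_injective h))

theorem inrHom_injective : Injective (inrHom G H u u₁ u₂ u₃ v₁ v₂ v₃) := by
  rintro ⟨_ | a, ha⟩ ⟨_ | b, hb⟩ h <;> first | exact absurd rfl ha | exact absurd rfl hb |
    exact Subtype.ext (congrArg some (Sum.inr_injective h))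

theorem disjoint_range_inlHom_range_inrHom :
    Disjoint (range (inlHom G H u u₁ u₂ u₃ v₁ v₂ v₃)) (range (inrHom G H u u₁ u₂ u₃ v₁ v₂ v₃)) :=
  disjoint_left.2 fun _ ⟨_, hx⟩ ⟨_, hy⟩ => Sum.inr_ne_inl (hy.trans hx.symm)

theorem mem_range_inlHom_or_mem_range_inrHom (x : {x : V // x ≠ u} ⊕ V') :
    x ∈ range (inlHom G H u u₁ u₂ u₃ v₁ v₂ v₃) ∨ x ∈ range (inrHom G H u u₁ u₂ u₃ v₁ v₂ v₃) := by
  rcases x with a | b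
  exacts [.inl ⟨⟨a, a.2⟩, rfl⟩, .inr ⟨⟨some b, Option.some_ne_none b⟩, rfl⟩]

theorem ncard_preimage_inlHom_add_ncard_preimage_inrHom_le [Finite V] [Finite V']
    (s : Set ({x : V // x ≠ u} ⊕ V')) :
    (inlHom G H u u₁ u₂ u₃ v₁ v₂ v₃ ⁻¹' s).ncard + (inrHom G H u u₁ u₂ u₃ v₁ v₂ v₃ ⁻¹' s).ncard ≤
      s.ncard := by
  rw [ncard_preimage_add_ncard_preimage inlHom_injective inrHom_injective
    disjoint_range_inlHom_range_inrHom]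
  exact ncard_le_ncard inter_subset_left

theorem exists_adj_inlHom_inrHom (hu : G.neighborSet u = {u₁, u₂, u₃})
    (a : ({u}ᶜ : Set V)) (ha : G.Adj a u) : ∃ b,
      (replaceVertex' G H u u₁ u₂ u₃ v₁ v₂ v₃).Adj (inlHom G H u u₁ u₂ u₃ v₁ v₂ v₃ a)
        (inrHom G H u u₁ u₂ u₃ v₁ v₂ v₃ b) := by
  have : (a : V) ∈ ({u₁, u₂, u₃} : Set V) := hu ▸ ha.symm
  rcases this with h | h | h
  exacts [⟨⟨some v₁, Option.some_ne_none _⟩, replaceVertex'_adj_inl_inr.2 (.inl ⟨h, rfl⟩)⟩,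
    ⟨⟨some v₂, Option.some_ne_none _⟩, replaceVertex'_adj_inl_inr.2 (.inr (.inl ⟨h, rfl⟩))⟩,
    ⟨⟨some v₃, Option.some_ne_none _⟩, replaceVertex'_adj_inl_inr.2 (.inr (.inr ⟨h, rfl⟩))⟩]

theorem exists_adj_inrHom_inlHom (hu : G.neighborSet u = {u₁, u₂, u₃})
    (b : ({none}ᶜ : Set (Option V'))) (hb : (cubicCompletionVertex H v₁ v₂ v₃).Adj b none) :
    ∃ a, (replaceVertex' G H u u₁ u₂ u₃ v₁ v₂ v₃).Adj (inrHom G H u u₁ u₂ u₃ v₁ v₂ v₃ b)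
      (inlHom G H u u₁ u₂ u₃ v₁ v₂ v₃ a) := by
  obtain ⟨h₁, h₂, h₃⟩ := ne_of_neighborSet_eq_insert hu
  obtain ⟨_ | b, hb'⟩ := b
  · exact absurd rfl hb'
  rcases cubicCompletionVertex_adj_some_none.1 hb with rfl | rfl | rfl
  exacts [⟨⟨u₁, h₁⟩, (replaceVertex'_adj_inl_inr.2 (.inl ⟨rfl, rfl⟩)).symm⟩,
    ⟨⟨u₂, h₂⟩, (replaceVertex'_adj_inl_inr.2 (.inr (.inl ⟨rfl, rfl⟩))).symm⟩,
    ⟨⟨u₃, h₃⟩, (replaceVertex'_adj_inl_inr.2 (.inr (.inr ⟨rfl, rfl⟩))).symm⟩]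

theorem exists_adj_inlHom_inrHom_notMem [Finite V] [Finite V']
    (hu : G.neighborSet u = {u₁, u₂, u₃}) (hu12 : u₁ ≠ u₂) (hu13 : u₁ ≠ u₃) (hu23 : u₂ ≠ u₃)
    (hv12 : v₁ ≠ v₂) (hv13 : v₁ ≠ v₃) (hv23 : v₂ ≠ v₃) {s : Set ({x : V // x ≠ u} ⊕ V')}
    (hs : s.ncard < 3) : ∃ a b, inlHom G H u u₁ u₂ u₃ v₁ v₂ v₃ a ∉ s ∧
      inrHom G H u u₁ u₂ u₃ v₁ v₂ v₃ b ∉ s ∧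
      (replaceVertex' G H u u₁ u₂ u₃ v₁ v₂ v₃).Adj (inlHom G H u u₁ u₂ u₃ v₁ v₂ v₃ a)
        (inrHom G H u u₁ u₂ u₃ v₁ v₂ v₃ b) := by
  obtain ⟨h₁, h₂, h₃⟩ := ne_of_neighborSet_eq_insert hu
  let a : Fin 3 → ({u}ᶜ : Set V) := ![⟨u₁, h₁⟩, ⟨u₂, h₂⟩, ⟨u₃, h₃⟩]
  let b : Fin 3 → ({none}ᶜ : Set (Option V')) :=
    ![⟨some v₁, Option.some_ne_none _⟩, ⟨some v₂, Option.some_ne_none _⟩,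
      ⟨some v₃, Option.some_ne_none _⟩]
  have ha : Injective a := by
    intro i j
    fin_cases i <;> fin_cases j <;>
      simp [a, Subtype.ext_iff, hu12, hu13, hu23, hu12.symm, hu13.symm, hu23.symm]
  have hb : Injective b := by
    intro i j
    fin_cases i <;> fin_cases j <;>
      simp [b, Subtype.ext_iff, hv12, hv13, hv23, hv12.symm, hv13.symm, hv23.symm]
  obtain ⟨i, hai, hbi⟩ := exists_notMem_and_notMem_of_ncard_lt (inlHom_injective.comp ha)
    (inrHom_injective.comp hb) (disjoint_range_inlHom_range_inrHom.mono
      (range_comp_subset_range _ _) (range_comp_subset_range _ _)) (toFinite s)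
    (by rwa [Nat.card_fin])
  refine ⟨a i, b i, hai, hbi, ?_⟩
  fin_cases i <;> simp [a, b, inlHom, inrHom, replaceVertex'_adj_inl_inr]

end replaceVertex'

theorem replaceVertex'_ncard_neighborSet_inl [Finite V] [Finite V']
    (hG3 : ∀ v : V, (G.neighborSet v).ncard = 3) (hu : G.neighborSet u = {u₁, u₂, u₃})
    (hu12 : u₁ ≠ u₂) (hu13 : u₁ ≠ u₃) (hu23 : u₂ ≠ u₃) (a : {x : V // x ≠ u}) :
    ((replaceVertex' G H u u₁ u₂ u₃ v₁ v₂ v₃).neighborSet (.inl a)).ncard = 3 := by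
  rw [← ncard_preimage_inl_add_ncard_preimage_inr]
  have hl : (Sum.inl ⁻¹' (replaceVertex' G H u u₁ u₂ u₃ v₁ v₂ v₃).neighborSet (.inl a)).ncard =
      (G.neighborSet a \ {u}).ncard := by
    rw [← ncard_image_of_injective _ Subtype.val_injective]
    congr 1
    ext x
    simp [replaceVertex'_adj_inl_inl, and_comm]
  rw [hl]
  by_cases hau : G.Adj a u
  · have hr : (Sum.inr ⁻¹' (replaceVertex' G H u u₁ u₂ u₃ v₁ v₂ v₃).neighborSet (.inl a)).ncard
        = 1 := by
      rw [ncard_eq_one]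
      have h : (a : V) ∈ G.neighborSet u := hau.symm
      simp only [hu, mem_insert_iff, mem_singleton_iff] at h
      rcases h with h | h | h
      exacts [⟨v₁, by ext; simp [replaceVertex'_adj_inl_inr, h, hu12, hu13]⟩,
        ⟨v₂, by ext; simp [replaceVertex'_adj_inl_inr, h, hu12.symm, hu23]⟩,
        ⟨v₃, by ext; simp [replaceVertex'_adj_inl_inr, h, hu13.symm, hu23.symm]⟩]
    rw [hr, ncard_sdiff_singleton_add_one (show u ∈ G.neighborSet a from hau), hG3]
  · have hr : Sum.inr ⁻¹' (replaceVertex' G H u u₁ u₂ u₃ v₁ v₂ v₃).neighborSet (.inl a) = ∅ := by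
      ext b
      simp only [mem_preimage, mem_neighborSet, replaceVertex'_adj_inl_inr, mem_empty_iff_false,
        iff_false]
      rintro (⟨h, -⟩ | ⟨h, -⟩ | ⟨h, -⟩) <;>
        exact hau (show a.1 ∈ G.neighborSet u by simp [hu, h]).symm
    rw [hr, ncard_empty, sdiff_singleton_eq_self (show u ∉ G.neighborSet a from hau), hG3]

theorem replaceVertex'_ncard_neighborSet_inr [Finite V] [Finite V'] [DecidableEq V']
    (hu : G.neighborSet u = {u₁, u₂, u₃}) (hv12 : v₁ ≠ v₂) (hv13 : v₁ ≠ v₃) (hv23 : v₂ ≠ v₃)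
    (hHdeg : ∀ x : V', (H.neighborSet x).ncard = if x = v₁ ∨ x = v₂ ∨ x = v₃ then 2 else 3)
    (b : V') : ((replaceVertex' G H u u₁ u₂ u₃ v₁ v₂ v₃).neighborSet (.inr b)).ncard = 3 := by
  rw [← ncard_preimage_inl_add_ncard_preimage_inr]
  have hr : Sum.inr ⁻¹' (replaceVertex' G H u u₁ u₂ u₃ v₁ v₂ v₃).neighborSet (.inr b) =
      H.neighborSet b := ext fun _ => replaceVertex'_adj_inr_inr
  rw [hr, hHdeg]
  split_ifs with hb
  · obtain ⟨h₁, h₂, h₃⟩ := ne_of_neighborSet_eq_insert hu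
    have hl : (Sum.inl ⁻¹' (replaceVertex' G H u u₁ u₂ u₃ v₁ v₂ v₃).neighborSet (.inr b)).ncard
        = 1 := by
      rw [ncard_eq_one]
      rcases hb with rfl | rfl | rfl
      exacts [⟨⟨u₁, h₁⟩, by
          ext; simp [adj_comm, replaceVertex'_adj_inl_inr, Subtype.ext_iff, hv12, hv13]⟩,
        ⟨⟨u₂, h₂⟩, by
          ext; simp [adj_comm, replaceVertex'_adj_inl_inr, Subtype.ext_iff, hv12.symm, hv23]⟩,
        ⟨⟨u₃, h₃⟩, by
          ext; simp [adj_comm, replaceVertex'_adj_inl_inr, Subtype.ext_iff, hv13.symm, hv23.symm]⟩]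
    rw [hl]
  · have hl : Sum.inl ⁻¹' (replaceVertex' G H u u₁ u₂ u₃ v₁ v₂ v₃).neighborSet (.inr b) = ∅ := by
      ext a
      simp only [mem_preimage, mem_neighborSet, adj_comm, replaceVertex'_adj_inl_inr,
        mem_empty_iff_false, iff_false]
      rintro (⟨-, rfl⟩ | ⟨-, rfl⟩ | ⟨-, rfl⟩) <;> simp at hb
    rw [hl, ncard_empty]

end ReplaceVertex

theorem replaceVertex_cubic_and_three_connected_general {V V' : Type*} [Fintype V] [Fintype V']
    [DecidableEq V']
    (G : SimpleGraph V) (H : SimpleGraph V') (u u₁ u₂ u₃ : V) (v₁ v₂ v₃ : V')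
    (hG3 : ∀ v : V, (G.neighborSet v).ncard = 3)
    (hu : G.neighborSet u = {u₁, u₂, u₃})
    (hu12 : u₁ ≠ u₂) (hu13 : u₁ ≠ u₃) (hu23 : u₂ ≠ u₃)
    (hv12 : v₁ ≠ v₂) (hv13 : v₁ ≠ v₃) (hv23 : v₂ ≠ v₃)
    (hHdeg : ∀ x : V', (H.neighborSet x).ncard = if x = v₁ ∨ x = v₂ ∨ x = v₃ then 2 else 3) :
    (∀ x : {x : V // x ≠ u} ⊕ V',
      ((replaceVertex' G H u u₁ u₂ u₃ v₁ v₂ v₃).neighborSet x).ncard = 3) ∧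
    (KConnected 3 G → KConnected 3 (cubicCompletionVertex H v₁ v₂ v₃) →
      KConnected 3 (replaceVertex' G H u u₁ u₂ u₃ v₁ v₂ v₃)) := by
  have hcubic : ∀ x : {x : V // x ≠ u} ⊕ V',
      ((replaceVertex' G H u u₁ u₂ u₃ v₁ v₂ v₃).neighborSet x).ncard = 3
    | .inl a => replaceVertex'_ncard_neighborSet_inl hG3 hu hu12 hu13 hu23 a
    | .inr b => replaceVertex'_ncard_neighborSet_inr hu hv12 hv13 hv23 hHdeg b
  refine ⟨hcubic, fun hG hH => ⟨three_lt_card_of_ncard_neighborSet_eq (hcubic (.inr v₁)),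
    fun s hs => ?_⟩⟩
  set f := replaceVertex'.inlHom G H u u₁ u₂ u₃ v₁ v₂ v₃
  set f' := replaceVertex'.inrHom G H u u₁ u₂ u₃ v₁ v₂ v₃
  have hcount : (f ⁻¹' s).ncard + (f' ⁻¹' s).ncard ≤ 2 :=
    (replaceVertex'.ncard_preimage_inlHom_add_ncard_preimage_inrHom_le s).trans (by omega)
  obtain ⟨a₀, b₀, ha₀, hb₀, hab₀⟩ :=
    replaceVertex'.exists_adj_inlHom_inrHom_notMem hu hu12 hu13 hu23 hv12 hv13 hv23 hs
  by_cases hs' : (f' ⁻¹' s).ncard ≤ 1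
  · exact hG.connected_induce_compl_of_glue hH f f'
      replaceVertex'.mem_range_inlHom_or_mem_range_inrHom
      (replaceVertex'.exists_adj_inlHom_inrHom hu) hcount hs' ha₀ hb₀ hab₀
  · exact hH.connected_induce_compl_of_glue hG f' f
      (fun x => (replaceVertex'.mem_range_inlHom_or_mem_range_inrHom x).symm)
      (replaceVertex'.exists_adj_inrHom_inlHom hu) (by omega) (by omega) hb₀ ha₀ hab₀.symm

/-- Replacing a vertex `u` of a finite 3-regular simple graph `G` (with neighbors
`u₁, u₂, u₃`) by a vertex gadget `H` (a finite connected simple graph with exactly three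
vertices `v₁, v₂, v₃` of degree 2 and all other vertices of degree 3) produces a 3-regular
graph `J`; moreover, if `G` and the cubic completion `H⁺` are 3-connected then so is `J`. -/
theorem replaceVertex_cubic_and_three_connected {V V' : Type*} [Fintype V] [Fintype V']
    [DecidableEq V] [DecidableEq V']
    (G : SimpleGraph V) (H : SimpleGraph V') (u u₁ u₂ u₃ : V) (v₁ v₂ v₃ : V')
    (hG3 : ∀ v : V, (G.neighborSet v).ncard = 3)
    (hu : G.neighborSet u = {u₁, u₂, u₃})
    (hu12 : u₁ ≠ u₂) (hu13 : u₁ ≠ u₃) (hu23 : u₂ ≠ u₃)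
    (hHconn : H.Connected)
    (hv12 : v₁ ≠ v₂) (hv13 : v₁ ≠ v₃) (hv23 : v₂ ≠ v₃)
    (hHdeg : ∀ x : V', (H.neighborSet x).ncard = if x = v₁ ∨ x = v₂ ∨ x = v₃ then 2 else 3) :
    (∀ x : {x : V // x ≠ u} ⊕ V',
      ((replaceVertex' G H u u₁ u₂ u₃ v₁ v₂ v₃).neighborSet x).ncard = 3) ∧
    (KConnected 3 G → KConnected 3 (cubicCompletionVertex H v₁ v₂ v₃) →
      KConnected 3 (replaceVertex' G H u u₁ u₂ u₃ v₁ v₂ v₃)) :=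
  replaceVertex_cubic_and_three_connected_general G H u u₁ u₂ u₃ v₁ v₂ v₃ hG3 hu hu12 hu13 hu23 hv12
    hv13 hv23 hHdeg
end

section
/- For any finite simple graph G, the relation E₃ on V(G), defined by u E₃ v if and only if there exist three pairwise edge-disjoint paths from u to v in G, is an equivalence relation (it is reflexive, symmetric, and transitive). -/
/-!
The relation holds exactly when `u` and `v` stay connected after deleting any two edges
(`G.IsEdgeReachable 3 u v`), and that relation is transitive for free: deleting the same edges
keeps `u ~ v` and `v ~ w`, hence `u ~ w`. Three disjoint paths give `3`-edge-reachability since two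
edges cannot meet all three. The converse is the edge version of Menger's theorem, proved with
unit-capacity flows: if a flow of value `j < k` had no augmenting path, the vertices reachable in
the residual graph would form a cut crossed by only `j` edges, contradicting `k`-edge-reachability;
a flow of value `k` is then peeled, one path of saturated arcs at a time, into `k` edge-disjoint
paths.
-/

open Finset

namespace SimpleGraph.Walk

variable {V : Type*} {G : SimpleGraph V} {u v : V}

lemma edges_eq_map_toProd (p : G.Walk u v) :
    p.edges = (p.darts.map Dart.toProd).map fun q => s(q.1, q.2) := by
  simp only [edges, List.map_map]
  rfl

lemma adj_of_mem_map_toProd {p : G.Walk u v} {x y : V} (h : (x, y) ∈ p.darts.map Dart.toProd) :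
    G.Adj x y := by
  obtain ⟨d, -, hd⟩ := List.mem_map.1 h
  simpa [hd] using d.adj

lemma mk_mem_edges_iff {p : G.Walk u v} {x y : V} :
    s(x, y) ∈ p.edges ↔
      (x, y) ∈ p.darts.map Dart.toProd ∨ (y, x) ∈ p.darts.map Dart.toProd := by
  rw [edges_eq_map_toProd, List.mem_map]
  constructor
  · rintro ⟨⟨a, b⟩, h, he⟩
    rcases Sym2.eq_iff.1 he with ⟨rfl, rfl⟩ | ⟨rfl, rfl⟩ <;> simp [h]
  · rintro (h | h)
    · exact ⟨_, h, rfl⟩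
    · exact ⟨_, h, Sym2.eq_swap⟩

variable [DecidableEq V]

def netFlow (p : G.Walk u v) (x y : V) : ℤ :=
  (p.darts.map Dart.toProd).count (x, y) - (p.darts.map Dart.toProd).count (y, x)

lemma netFlow_swap (p : G.Walk u v) (x y : V) : p.netFlow y x = -p.netFlow x y := by
  simp [netFlow]

lemma sum_netFlow [Fintype V] (p : G.Walk u v) (x : V) :
    ∑ y, p.netFlow x y = (if x = u then 1 else 0) - (if x = v then 1 else 0) := by
  induction p with
  | nil => simp [netFlow]
  | @cons a b c h p ih =>
    have hstep : ∀ y, (cons h p).netFlow x y = p.netFlow x y +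
        ((if (a, b) = (x, y) then 1 else 0) - (if (a, b) = (y, x) then 1 else 0)) := by
      intro y
      simp only [netFlow, darts_cons, List.map_cons, List.count_cons, beq_iff_eq]
      push_cast
      ring
    have hout : ∑ y, (if (a, b) = (x, y) then (1 : ℤ) else 0) = if x = a then 1 else 0 := by
      simp [Prod.ext_iff, ite_and, eq_comm]
    have hin : ∑ y, (if (a, b) = (y, x) then (1 : ℤ) else 0) = if x = b then 1 else 0 := by
      simp [Prod.ext_iff, ite_and, eq_comm]
    rw [Finset.sum_congr rfl fun y _ => hstep y, Finset.sum_add_distrib, Finset.sum_sub_distrib,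
      ih, hout, hin]
    ring

lemma IsTrail.netFlow_eq {p : G.Walk u v} (hp : p.IsTrail) (x y : V) :
    p.netFlow x y = if (x, y) ∈ p.darts.map Dart.toProd then 1
      else if (y, x) ∈ p.darts.map Dart.toProd then -1 else 0 := by
  have hmk := hp.edges_nodup
  rw [edges_eq_map_toProd] at hmk
  have hcount : ∀ a, ((p.darts.map Dart.toProd).count a : ℤ) =
      if a ∈ p.darts.map Dart.toProd then 1 else 0 := by
    intro a
    split_ifs with ha
    · simp [List.count_eq_one_of_mem hmk.of_map ha]
    · simp [List.count_eq_zero.2 ha]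
  rw [netFlow, hcount, hcount]
  split_ifs with hxy hyx <;> try rfl
  have := List.inj_on_of_nodup_map hmk hxy hyx Sym2.eq_swap
  exact absurd (Prod.ext_iff.1 this).1 (adj_of_mem_map_toProd hxy).ne

lemma IsTrail.adj_of_netFlow_ne_zero {p : G.Walk u v} (hp : p.IsTrail) {x y : V}
    (h : p.netFlow x y ≠ 0) : G.Adj x y := by
  rw [hp.netFlow_eq] at h
  split_ifs at h with hxy hyx
  · exact adj_of_mem_map_toProd hxy
  · exact (adj_of_mem_map_toProd hyx).symm
  · exact absurd rfl h

end SimpleGraph.Walk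

lemma Relation.exists_finset_of_not_reflTransGen {α : Type*} [Fintype α] {r : α → α → Prop}
    {a b : α} (h : ¬ Relation.ReflTransGen r a b) :
    ∃ S : Finset α, a ∈ S ∧ b ∉ S ∧ ∀ x ∈ S, ∀ y, r x y → y ∈ S := by
  classical
  refine ⟨({x | Relation.ReflTransGen r a x} : Finset α), ?_, ?_, ?_⟩ <;>
    simp only [Finset.mem_filter, Finset.mem_univ, true_and]
  · exact .refl
  · exact h
  · exact fun x hx y hxy => hx.tail hxy

namespace SimpleGraph

variable {V : Type*} {G : SimpleGraph V} {s t : V} {k : ℕ}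

lemma exists_isPath_of_reflTransGen [DecidableEq V] {r : V → V → Prop}
    (hr : ∀ x y, r x y → G.Adj x y) (h : Relation.ReflTransGen r s t) :
    ∃ p : G.Walk s t, p.IsPath ∧ ∀ d ∈ p.darts, r d.fst d.snd := by
  suffices ∃ p : G.Walk s t, ∀ d ∈ p.darts, r d.fst d.snd by
    obtain ⟨p, hp⟩ := this
    exact ⟨p.bypass, p.bypass_isPath, fun d hd => hp d (p.darts_bypass_subset_darts hd)⟩
  induction h with
  | refl => exact ⟨.nil, by simp⟩
  | tail _ hbc ih =>
    obtain ⟨p, hp⟩ := ih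
    refine ⟨p.concat (hr _ _ hbc), fun d hd => ?_⟩
    rw [Walk.darts_concat, List.concat_eq_append, List.mem_append, List.mem_singleton] at hd
    rcases hd with hd | rfl
    exacts [hp d hd, hbc]

lemma IsEdgeReachable.le_card_cut [Fintype V] [DecidableEq V] [DecidableRel G.Adj]
    (h : G.IsEdgeReachable k s t) {S : Finset V} (hs : s ∈ S) (ht : t ∉ S) :
    k ≤ #{q ∈ S ×ˢ Sᶜ | G.Adj q.1 q.2} := by
  by_contra! hlt
  set F : Finset (Sym2 V) := {q ∈ S ×ˢ Sᶜ | G.Adj q.1 q.2}.image fun q => s(q.1, q.2)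
  have hF : (F : Set (Sym2 V)).encard < k := by
    rw [Set.encard_coe_eq_coe_finsetCard]
    exact_mod_cast card_image_le.trans_lt hlt
  obtain ⟨p⟩ := h hF
  obtain ⟨d, -, hdS, hdS'⟩ := p.exists_boundary_dart S hs ht
  have hd := d.adj
  rw [deleteEdges_adj] at hd
  refine hd.2 (mem_image.2 ⟨d.toProd, ?_, rfl⟩)
  simp_all

/-- `f x y` is the net flow along the arc `x → y`, so by skew-symmetry `f x y ≤ 1` bounds the
flow by `1` in both directions of each edge. -/
structure IsUnitFlow [Fintype V] (G : SimpleGraph V) (s t : V) (f : V → V → ℤ) (k : ℕ) :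
    Prop where
  neg_swap : ∀ x y, f y x = -f x y
  le_one : ∀ x y, f x y ≤ 1
  adj : ∀ x y, f x y ≠ 0 → G.Adj x y
  sum_eq_zero : ∀ x, x ≠ s → x ≠ t → ∑ y, f x y = 0
  sum_source : ∑ y, f s y = k

namespace IsUnitFlow

variable [Fintype V] {f : V → V → ℤ}

lemma zero : IsUnitFlow G s t 0 0 where
  neg_swap := by simp
  le_one := by simp
  adj := by simp
  sum_eq_zero := by simp
  sum_source := by simp

lemma sum_cut [DecidableEq V] (hf : IsUnitFlow G s t f k) {S : Finset V} (hs : s ∈ S)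
    (ht : t ∉ S) : ∑ x ∈ S, ∑ y ∈ Sᶜ, f x y = k := by
  have hinner : ∑ x ∈ S, ∑ y ∈ S, f x y = 0 := by
    have hanti : ∑ x ∈ S, ∑ y ∈ S, f x y = -∑ x ∈ S, ∑ y ∈ S, f x y := by
      conv_lhs => rw [Finset.sum_comm]
      simp only [← Finset.sum_neg_distrib]
      exact Finset.sum_congr rfl fun x _ => Finset.sum_congr rfl fun y _ => hf.neg_swap x y
    linarith
  rw [← hf.sum_source, ← Finset.sum_eq_single_of_mem s hs
    fun x hx hxs => hf.sum_eq_zero x hxs (ne_of_mem_of_not_mem hx ht)]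
  simp_rw [← Finset.sum_add_sum_compl S (f _)]
  rw [Finset.sum_add_distrib, hinner, zero_add]

variable [DecidableEq V] {p : G.Walk s t}

lemma add_netFlow (hf : IsUnitFlow G s t f k) (hst : s ≠ t) (hp : p.IsPath)
    (hpf : ∀ d ∈ p.darts, f d.fst d.snd ≤ 0) : IsUnitFlow G s t (f + p.netFlow) (k + 1) where
  neg_swap x y := by simp only [Pi.add_apply, hf.neg_swap x y, p.netFlow_swap x y]; ring
  le_one x y := by
    have hpf' : ∀ q ∈ p.darts.map Dart.toProd, f q.1 q.2 ≤ 0 := List.forall_mem_map.2 hpf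
    simp only [Pi.add_apply, hp.isTrail.netFlow_eq]
    split_ifs with hxy
    · linarith [hpf' _ hxy]
    all_goals linarith [hf.le_one x y]
  adj x y h := by
    by_cases hpxy : p.netFlow x y = 0
    · exact hf.adj x y (by simpa [hpxy] using h)
    · exact hp.isTrail.adj_of_netFlow_ne_zero hpxy
  sum_eq_zero x hxs hxt := by
    simp [Finset.sum_add_distrib, hf.sum_eq_zero x hxs hxt, Walk.sum_netFlow, hxs, hxt]
  sum_source := by
    simp [Finset.sum_add_distrib, hf.sum_source, Walk.sum_netFlow, hst]

lemma sub_netFlow (hf : IsUnitFlow G s t f (k + 1)) (hst : s ≠ t) (hp : p.IsPath)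
    (hpf : ∀ d ∈ p.darts, f d.fst d.snd = 1) : IsUnitFlow G s t (f - p.netFlow) k where
  neg_swap x y := by simp only [Pi.sub_apply, hf.neg_swap x y, p.netFlow_swap x y]; ring
  le_one x y := by
    have hpf' : ∀ q ∈ p.darts.map Dart.toProd, f q.1 q.2 = 1 := List.forall_mem_map.2 hpf
    simp only [Pi.sub_apply, hp.isTrail.netFlow_eq]
    split_ifs with hxy hyx
    · linarith [hpf' _ hxy]
    · linarith [hpf' _ hyx, hf.neg_swap x y]
    · linarith [hf.le_one x y]
  adj x y h := by
    by_cases hpxy : p.netFlow x y = 0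
    · exact hf.adj x y (by simpa [hpxy] using h)
    · exact hp.isTrail.adj_of_netFlow_ne_zero hpxy
  sum_eq_zero x hxs hxt := by
    simp [Finset.sum_sub_distrib, hf.sum_eq_zero x hxs hxt, Walk.sum_netFlow, hxs, hxt]
  sum_source := by
    simp [Finset.sum_sub_distrib, hf.sum_source, Walk.sum_netFlow, hst]

lemma eq_one_of_sub_netFlow_eq_one (hf : IsUnitFlow G s t f k) (hp : p.IsTrail)
    (hpf : ∀ d ∈ p.darts, f d.fst d.snd = 1) {x y : V} (h : f x y - p.netFlow x y = 1) :
    f x y = 1 ∧ s(x, y) ∉ p.edges := by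
  have hpf' : ∀ q ∈ p.darts.map Dart.toProd, f q.1 q.2 = 1 := List.forall_mem_map.2 hpf
  rw [hp.netFlow_eq] at h
  split_ifs at h with hxy hyx
  · linarith [hpf' _ hxy]
  · linarith [hpf' _ hyx, hf.neg_swap x y]
  · rw [Walk.mk_mem_edges_iff]
    exact ⟨by simpa using h, by tauto⟩

lemma exists_isPath_le_zero (hf : IsUnitFlow G s t f k) (h : G.IsEdgeReachable (k + 1) s t) :
    ∃ p : G.Walk s t, p.IsPath ∧ ∀ d ∈ p.darts, f d.fst d.snd ≤ 0 := by
  classical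
  suffices hr : Relation.ReflTransGen (fun x y => G.Adj x y ∧ f x y ≤ 0) s t by
    obtain ⟨p, hp, hpf⟩ := exists_isPath_of_reflTransGen (fun _ _ h => h.1) hr
    exact ⟨p, hp, fun d hd => (hpf d hd).2⟩
  by_contra hr
  obtain ⟨S, hs, ht, hS⟩ := Relation.exists_finset_of_not_reflTransGen hr
  have hcross : ∀ x ∈ S, ∀ y ∈ Sᶜ, f x y = if G.Adj x y then 1 else 0 := by
    intro x hx y hy
    split_ifs with hxy
    · by_contra hne
      have := hf.le_one x y
      exact mem_compl.1 hy (hS x hx y ⟨hxy, by omega⟩)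
    · by_contra hne
      exact hxy (hf.adj x y hne)
  have hcut := hf.sum_cut hs ht
  rw [Finset.sum_congr rfl fun x hx => Finset.sum_congr rfl (hcross x hx), ← Finset.sum_product',
    Finset.sum_boole] at hcut
  have := h.le_card_cut hs ht
  omega

lemma exists_isPath_eq_one (hf : IsUnitFlow G s t f (k + 1)) :
    ∃ p : G.Walk s t, p.IsPath ∧ ∀ d ∈ p.darts, f d.fst d.snd = 1 := by
  apply exists_isPath_of_reflTransGen (r := fun x y => f x y = 1)
    fun x y h => hf.adj x y (by omega)
  by_contra hr
  obtain ⟨S, hs, ht, hS⟩ := Relation.exists_finset_of_not_reflTransGen hr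
  have hcut := hf.sum_cut hs ht
  have : ∑ x ∈ S, ∑ y ∈ Sᶜ, f x y ≤ 0 := by
    refine Finset.sum_nonpos fun x hx => Finset.sum_nonpos fun y hy => ?_
    have hne : f x y ≠ 1 := fun h => mem_compl.1 hy (hS x hx y h)
    have := hf.le_one x y
    omega
  omega

lemma exists_isPath_pairwise_disjoint (hf : IsUnitFlow G s t f k) (hst : s ≠ t) :
    ∃ P : Fin k → G.Walk s t, (∀ i, (P i).IsPath) ∧
      (∀ i, ∀ d ∈ (P i).darts, f d.fst d.snd = 1) ∧
      Pairwise fun i j => (P i).edges.Disjoint (P j).edges := by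
  induction k generalizing f with
  | zero => exact ⟨finZeroElim, fun i => i.elim0, fun i => i.elim0, fun i => i.elim0⟩
  | succ k ih =>
    obtain ⟨p, hp, hpf⟩ := hf.exists_isPath_eq_one
    obtain ⟨P, hP, hPf, hPdisj⟩ := ih (hf.sub_netFlow hst hp hpf)
    have hunit i : ∀ d ∈ (P i).darts, f d.fst d.snd = 1 ∧ d.edge ∉ p.edges :=
      fun d hd => hf.eq_one_of_sub_netFlow_eq_one hp.isTrail hpf (hPf i d hd)
    have hdisj i : p.edges.Disjoint (P i).edges := by
      intro e hep heP
      obtain ⟨d, hd, rfl⟩ := List.mem_map.1 heP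
      exact (hunit i d hd).2 hep
    refine ⟨Fin.cons p P, Fin.cases hp hP, Fin.cases hpf fun i d hd => (hunit i d hd).1, ?_⟩
    intro i j hij
    cases i using Fin.cases <;> cases j using Fin.cases
    · exact absurd rfl hij
    · exact hdisj _
    · exact (hdisj _).symm
    · exact hPdisj (fun h => hij (congrArg Fin.succ h))

end IsUnitFlow

lemma IsEdgeReachable.exists_isPath_pairwise_disjoint [Fintype V] (h : G.IsEdgeReachable k s t) :
    ∃ P : Fin k → G.Walk s t, (∀ i, (P i).IsPath) ∧
      Pairwise fun i j => (P i).edges.Disjoint (P j).edges := by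
  classical
  rcases eq_or_ne s t with rfl | hst
  · exact ⟨fun _ => .nil, fun _ => .nil, fun _ _ _ => by simp⟩
  have hflow : ∀ j ≤ k, ∃ f, IsUnitFlow G s t f j := by
    intro j
    induction j with
    | zero => exact fun _ => ⟨0, .zero⟩
    | succ j ih =>
      intro hj
      obtain ⟨f, hf⟩ := ih (by omega)
      obtain ⟨p, hp, hpf⟩ := hf.exists_isPath_le_zero (h.anti hj)
      exact ⟨_, hf.add_netFlow hst hp hpf⟩
  obtain ⟨f, hf⟩ := hflow k le_rfl
  obtain ⟨P, hP, -, hdisj⟩ := hf.exists_isPath_pairwise_disjoint hst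
  exact ⟨P, hP, hdisj⟩

lemma isEdgeReachable_of_pairwise_disjoint (P : Fin k → G.Walk s t)
    (hP : Pairwise fun i j => (P i).edges.Disjoint (P j).edges) : G.IsEdgeReachable k s t := by
  intro F hF
  by_contra hr
  have hmeet : ∀ i, ∃ e ∈ (P i).edges, e ∈ F := by
    intro i
    by_contra! hi
    exact hr ⟨(P i).toDeleteEdges F hi⟩
  choose e he heF using hmeet
  have he_inj : Function.Injective e := by
    intro i j hij
    by_contra hne
    exact hP hne (he i) (hij ▸ he j)
  have hk : ENat.card (Fin k) ≤ F.encard :=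
    he_inj.encard_range.trans (Set.encard_le_encard (Set.range_subset_iff.2 heF))
  rw [ENat.card_eq_coe_fintype_card, Fintype.card_fin] at hk
  exact (hk.trans_lt hF).false

lemma exists_three_edge_disjoint_paths_iff [Fintype V] :
    (∃ p q r : G.Walk s t, p.IsPath ∧ q.IsPath ∧ r.IsPath ∧
      p.edges.Disjoint q.edges ∧ p.edges.Disjoint r.edges ∧ q.edges.Disjoint r.edges) ↔
      G.IsEdgeReachable 3 s t := by
  constructor
  · rintro ⟨p, q, r, -, -, -, hpq, hpr, hqr⟩
    refine isEdgeReachable_of_pairwise_disjoint ![p, q, r] fun i j hij => ?_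
    fin_cases i <;> fin_cases j <;> simp at hij ⊢
    all_goals first | assumption | exact List.disjoint_comm.1 ‹_›
  · intro h
    obtain ⟨P, hP, hdisj⟩ := h.exists_isPath_pairwise_disjoint
    exact ⟨P 0, P 1, P 2, hP 0, hP 1, hP 2,
      hdisj (by decide), hdisj (by decide), hdisj (by decide)⟩

end SimpleGraph

open SimpleGraph

/-- For any finite simple graph `G`, the relation `E₃` on the vertices, where `u E₃ v` iff
there exist three pairwise edge-disjoint paths from `u` to `v`, is an equivalence relation. -/
theorem three_edge_disjoint_paths_equivalence {V : Type*} [Fintype V] (G : SimpleGraph V) :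
    Equivalence (fun u v : V => ∃ p q r : G.Walk u v,
      p.IsPath ∧ q.IsPath ∧ r.IsPath ∧
      p.edges.Disjoint q.edges ∧ p.edges.Disjoint r.edges ∧ q.edges.Disjoint r.edges) := by
  simp only [exists_three_edge_disjoint_paths_iff]
  exact ⟨IsEdgeReachable.refl, IsEdgeReachable.symm, IsEdgeReachable.trans⟩
end
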